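/- arXiv:math/0110019 — 10 statements merged into one kernel-verified Lean document; each statement's English description precedes it below -/
import Mathlib

section
/- Let α be an alternating bilinear form on V in normal form with respect to an orthonormal basis (e₁,e₂,e₃,e₄): α(e₁,e₂) = λ₁, α(e₃,e₄) = λ₂, and α(e₁,e₃) = α(e₁,e₄) = α(e₂,e₃) = α(e₂,e₄) = 0. Then the supremum of α(u,v) over all orthonormal pairs (u,v) in V equals max{|λ₁|, |λ₂|}, and this supremum is attained by some orthonormal pair; i.e. comass(α) = max{|λ₁|, |λ₂|}. -/
open scoped RealInnerProductSpace


lemma key_ineq' (p q A B C D : ℝ) (hA : 0 ≤ A) (hB : 0 ≤ B) (hC : 0 ≤ C) (hD : 0 ≤ D)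
    (hAB : A + B = 1) (hCD : C + D = 1) (hpP : p^2 ≤ A*C) (hqQ : q^2 ≤ B*D) :
    |p| + |q| ≤ 1 := by
  have hPQ : |p| * |q| ≤ (A*D + B*C)/2 := by
    have h1 : (|p| * |q|)^2 ≤ (A*C)*(B*D) := by
      rw [mul_pow, sq_abs, sq_abs]
      exact mul_le_mul hpP hqQ (sq_nonneg q) (by positivity)
    nlinarith [sq_nonneg (A*D - B*C), mul_nonneg (abs_nonneg p) (abs_nonneg q),
      mul_nonneg hA hD, mul_nonneg hB hC]
  nlinarith [sq_abs p, sq_abs q, abs_nonneg p, abs_nonneg q]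

lemma bound' (a₀ a₁ a₂ a₃ b₀ b₁ b₂ b₃ l₁ l₂ : ℝ)
    (ha : a₀^2 + a₁^2 + a₂^2 + a₃^2 = 1) (hb : b₀^2 + b₁^2 + b₂^2 + b₃^2 = 1) :
    l₁ * (a₀*b₁ - a₁*b₀) + l₂ * (a₂*b₃ - a₃*b₂) ≤ max |l₁| |l₂| := by
  have hsum : |a₀*b₁ - a₁*b₀| + |a₂*b₃ - a₃*b₂| ≤ 1 := by
    apply key_ineq' _ _ (a₀^2 + a₁^2) (a₂^2 + a₃^2) (b₀^2 + b₁^2) (b₂^2 + b₃^2)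
      (by positivity) (by positivity) (by positivity) (by positivity)
      (by linarith) (by linarith)
    · nlinarith [sq_nonneg (a₀*b₀ + a₁*b₁)]
    · nlinarith [sq_nonneg (a₂*b₂ + a₃*b₃)]
  have hm : (0:ℝ) ≤ max |l₁| |l₂| := le_max_iff.mpr (Or.inl (abs_nonneg _))
  calc l₁ * (a₀*b₁ - a₁*b₀) + l₂ * (a₂*b₃ - a₃*b₂)
      ≤ |l₁| * |a₀*b₁ - a₁*b₀| + |l₂| * |a₂*b₃ - a₃*b₂| := by
        gcongr ?_ + ?_ <;> exact (le_abs_self _).trans (abs_mul _ _).le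
      _ ≤ max |l₁| |l₂| * |a₀*b₁ - a₁*b₀| + max |l₁| |l₂| * |a₂*b₃ - a₃*b₂| := by
        gcongr
        · exact le_max_left _ _
        · exact le_max_right _ _
      _ = max |l₁| |l₂| * (|a₀*b₁ - a₁*b₀| + |a₂*b₃ - a₃*b₂|) := by ring
      _ ≤ max |l₁| |l₂| * 1 := by gcongr
      _ = _ := mul_one _


set_option maxHeartbeats 1000000 in
/-- For an alternating bilinear form in normal form `λ₁ e₁*∧e₂* + λ₂ e₃*∧e₄*` with respect
to an orthonormal basis, the comass (the supremum of `α(u,v)` over orthonormal pairs) equals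
`max {|λ₁|, |λ₂|}`, and the supremum is attained. -/
theorem comass_eq_max_abs
    {V : Type*} [NormedAddCommGroup V] [InnerProductSpace ℝ V]
    (hdim : Module.finrank ℝ V = 4)
    (α : V →ₗ[ℝ] V →ₗ[ℝ] ℝ) (halt : ∀ x y : V, α x y = - α y x)
    (e : OrthonormalBasis (Fin 4) ℝ V) (l₁ l₂ : ℝ)
    (h12 : α (e 0) (e 1) = l₁) (h34 : α (e 2) (e 3) = l₂)
    (h13 : α (e 0) (e 2) = 0) (h14 : α (e 0) (e 3) = 0)
    (h23 : α (e 1) (e 2) = 0) (h24 : α (e 1) (e 3) = 0) :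
    IsGreatest {r : ℝ | ∃ u v : V, ‖u‖ = 1 ∧ ‖v‖ = 1 ∧ ⟪u, v⟫ = 0 ∧ α u v = r}
      (max |l₁| |l₂|) := by
  have hdiag : ∀ x : V, α x x = 0 := fun x => by have := halt x x; linarith
  have hne : ∀ i, ‖e i‖ = 1 := fun i => e.orthonormal.1 i
  have hinner : ∀ i j, i ≠ j → ⟪e i, e j⟫ = 0 := fun i j h => e.orthonormal.2 h
  constructor
  · -- membership: attained
    rcases le_total |l₁| |l₂| with h | h
    · rw [max_eq_right h]
      refine ⟨e 2, (if 0 ≤ l₂ then (1:ℝ) else -1) • e 3, hne 2, ?_, ?_, ?_⟩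
      · rw [norm_smul]; split_ifs <;> simp [hne 3]
      · rw [inner_smul_right]; simp [hinner 2 3 (by decide)]
      · rw [map_smul, smul_eq_mul, h34]
        split_ifs with h'
        · rw [one_mul, abs_of_nonneg h']
        · rw [abs_of_neg (lt_of_not_ge h')]; ring
    · rw [max_eq_left h]
      refine ⟨e 0, (if 0 ≤ l₁ then (1:ℝ) else -1) • e 1, hne 0, ?_, ?_, ?_⟩
      · rw [norm_smul]; split_ifs <;> simp [hne 1]
      · rw [inner_smul_right]; simp [hinner 0 1 (by decide)]
      · rw [map_smul, smul_eq_mul, h12]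
        split_ifs with h'
        · rw [one_mul, abs_of_nonneg h']
        · rw [abs_of_neg (lt_of_not_ge h')]; ring
  · -- upper bound
    rintro r ⟨u, v, hu, hv, huv, rfl⟩
    set a : Fin 4 → ℝ := fun i => ⟪e i, u⟫ with hadef
    set b : Fin 4 → ℝ := fun i => ⟪e i, v⟫ with hbdef
    have hexpand : α u v = l₁ * (a 0 * b 1 - a 1 * b 0) + l₂ * (a 2 * b 3 - a 3 * b 2) := by
      have hu' : (∑ i, a i • e i) = u := e.sum_repr' u
      have hv' : (∑ i, b i • e i) = v := e.sum_repr' v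
      rw [← hu', ← hv']
      simp only [map_sum, map_smul, LinearMap.sum_apply, LinearMap.smul_apply, smul_eq_mul]
      rw [Fin.sum_univ_four]
      simp only [Fin.sum_univ_four]
      have h21 : α (e 1) (e 0) = -l₁ := by rw [halt, h12]
      have h43 : α (e 3) (e 2) = -l₂ := by rw [halt, h34]
      have h31 : α (e 2) (e 0) = 0 := by rw [halt, h13]; ring
      have h41 : α (e 3) (e 0) = 0 := by rw [halt, h14]; ring
      have h32 : α (e 2) (e 1) = 0 := by rw [halt, h23]; ring
      have h42 : α (e 3) (e 1) = 0 := by rw [halt, h24]; ring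
      simp only [h12, h13, h14, h21, h23, h24, h31, h32, h34, h41, h42, h43,
        hdiag (e 0), hdiag (e 1), hdiag (e 2), hdiag (e 3)]
      ring
    have hasum : a 0 ^ 2 + a 1 ^ 2 + a 2 ^ 2 + a 3 ^ 2 = 1 := by
      have := e.sum_inner_mul_inner u u
      rw [Fin.sum_univ_four] at this
      simp only [real_inner_self_eq_norm_sq, hu] at this
      simp only [hadef]
      have hsymm : ∀ i : Fin 4, ⟪u, e i⟫ = ⟪e i, u⟫ := fun i => real_inner_comm _ _
      rw [hsymm 0, hsymm 1, hsymm 2, hsymm 3] at this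
      nlinarith [this]
    have hbsum : b 0 ^ 2 + b 1 ^ 2 + b 2 ^ 2 + b 3 ^ 2 = 1 := by
      have := e.sum_inner_mul_inner v v
      rw [Fin.sum_univ_four] at this
      simp only [real_inner_self_eq_norm_sq, hv] at this
      simp only [hbdef]
      have hsymm : ∀ i : Fin 4, ⟪v, e i⟫ = ⟪e i, v⟫ := fun i => real_inner_comm _ _
      rw [hsymm 0, hsymm 1, hsymm 2, hsymm 3] at this
      nlinarith [this]
    rw [hexpand]
    exact bound' _ _ _ _ _ _ _ _ _ _ hasum hbsum
end

section
/- Let α be an alternating bilinear form on V in normal form with respect to an orthonormal basis (e₁,e₂,e₃,e₄): α(e₁,e₂) = λ₁, α(e₃,e₄) = λ₂, and α(e₁,e₃) = α(e₁,e₄) = α(e₂,e₃) = α(e₂,e₄) = 0, and assume |λ₁| > |λ₂|. Then every orthonormal pair (u,v) in V with α(u,v) = max{|λ₁|, |λ₂|} spans the two-dimensional subspace span{e₁, e₂}; in particular, a unique two-plane is calibrated by α. -/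
open scoped RealInnerProductSpace

private lemma key_ineq (l₁ l₂ p q A B : ℝ) (hA : 0 ≤ A) (hB : 0 ≤ B) (hA1 : A ≤ 1) (hB1 : B ≤ 1)
    (hp : p^2 ≤ A*B) (hq : q^2 ≤ (1-A)*(1-B)) (hl : |l₂| < |l₁|)
    (heq : l₁*p + l₂*q = |l₁|) : A = 1 ∧ B = 1 := by
  have hp2 : 2 * |p| ≤ A + B := by
    nlinarith [sq_abs p, sq_nonneg (A-B), abs_nonneg p, sq_nonneg (A + B - 2 * |p|)]
  have hq2 : 2 * |q| ≤ (1-A) + (1-B) := by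
    nlinarith [sq_abs q, sq_nonneg (A-B), abs_nonneg q, sq_nonneg ((1-A) + (1-B) - 2 * |q|)]
  have h1 : |l₁| ≤ |l₁| * |p| + |l₂| * |q| := by
    calc |l₁| = l₁*p + l₂*q := heq.symm
    _ ≤ |l₁*p + l₂*q| := le_abs_self _
    _ ≤ |l₁ * p| + |l₂ * q| := abs_add_le _ _
    _ = |l₁| * |p| + |l₂| * |q| := by rw [abs_mul, abs_mul]
  have hab : 2 ≤ A + B := by
    nlinarith [abs_nonneg p, abs_nonneg q, abs_nonneg l₁, abs_nonneg l₂,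
      mul_le_mul_of_nonneg_left hp2 (abs_nonneg l₁),
      mul_le_mul_of_nonneg_left hq2 (abs_nonneg l₂)]
  constructor <;> linarith

private lemma key_coords (l₁ l₂ a0 a1 a2 a3 b0 b1 b2 b3 : ℝ)
    (hna : a0^2 + a1^2 + a2^2 + a3^2 = 1) (hnb : b0^2 + b1^2 + b2^2 + b3^2 = 1)
    (hl : |l₂| < |l₁|)
    (heq : l₁ * (a0*b1 - a1*b0) + l₂ * (a2*b3 - a3*b2) = |l₁|) :
    a2 = 0 ∧ a3 = 0 ∧ b2 = 0 ∧ b3 = 0 := by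
  have hkey := key_ineq l₁ l₂ (a0*b1 - a1*b0) (a2*b3 - a3*b2) (a0^2 + a1^2) (b0^2 + b1^2)
    (by positivity) (by positivity)
    (by nlinarith [sq_nonneg a2, sq_nonneg a3]) (by nlinarith [sq_nonneg b2, sq_nonneg b3])
    (by nlinarith [sq_nonneg (a0*b0 + a1*b1)]) (by nlinarith [sq_nonneg (a2*b2 + a3*b3)])
    hl heq
  refine ⟨?_, ?_, ?_, ?_⟩
  · nlinarith [hkey.1, sq_nonneg a2, sq_nonneg a3]
  · nlinarith [hkey.1, sq_nonneg a2, sq_nonneg a3]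
  · nlinarith [hkey.2, sq_nonneg b2, sq_nonneg b3]
  · nlinarith [hkey.2, sq_nonneg b2, sq_nonneg b3]

private lemma span_pair_finrank {V : Type*} [NormedAddCommGroup V] [InnerProductSpace ℝ V]
    (x y : V) (hx : ‖x‖ = 1) (hy : ‖y‖ = 1) (hxy : ⟪x, y⟫ = 0) :
    Module.finrank ℝ (Submodule.span ℝ ({x, y} : Set V)) = 2 := by
  have hset : ({x, y} : Set V) = Set.range ![x, y] := by
    rw [Matrix.range_cons_cons_empty]
  have horth : Orthonormal ℝ ![x, y] := by
    rw [orthonormal_iff_ite]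
    intro i j
    fin_cases i <;> fin_cases j <;>
      simp_all [real_inner_self_eq_norm_mul_norm, real_inner_comm x y]
  rw [hset, finrank_span_eq_card horth.linearIndependent]
  simp

set_option maxHeartbeats 1000000 in
/-- If `α` is in normal form `λ₁ e₁*∧e₂* + λ₂ e₃*∧e₄*` with `|λ₁| > |λ₂|`, then every
orthonormal pair realizing the comass `max {|λ₁|, |λ₂|}` spans the plane `span {e₁, e₂}`;
i.e. a unique two-plane is calibrated by `α`. -/
theorem calibrated_plane_unique
    {V : Type*} [NormedAddCommGroup V] [InnerProductSpace ℝ V]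
    (hdim : Module.finrank ℝ V = 4)
    (α : V →ₗ[ℝ] V →ₗ[ℝ] ℝ) (halt : ∀ x y : V, α x y = - α y x)
    (e : OrthonormalBasis (Fin 4) ℝ V) (l₁ l₂ : ℝ)
    (h12 : α (e 0) (e 1) = l₁) (h34 : α (e 2) (e 3) = l₂)
    (h13 : α (e 0) (e 2) = 0) (h14 : α (e 0) (e 3) = 0)
    (h23 : α (e 1) (e 2) = 0) (h24 : α (e 1) (e 3) = 0)
    (hl : |l₁| > |l₂|) :
    ∀ u v : V, ‖u‖ = 1 → ‖v‖ = 1 → ⟪u, v⟫ = 0 → α u v = max |l₁| |l₂| →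
      Submodule.span ℝ {u, v} = Submodule.span ℝ {e 0, e 1} := by
  intro u v hu hv huv hαuv
  have hαexpand : ∀ x y : V,
      α x y = ∑ i : Fin 4, ∑ j : Fin 4, (⟪e i, x⟫ * ⟪e j, y⟫) * α (e i) (e j) := by
    intro x y
    conv_lhs => rw [← e.sum_repr' x, ← e.sum_repr' y]
    simp only [map_sum, map_smul, LinearMap.sum_apply, LinearMap.smul_apply, smul_eq_mul,
      Finset.mul_sum]
    rw [Finset.sum_comm]
    exact Finset.sum_congr rfl fun i _ => Finset.sum_congr rfl fun j _ => by ring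
  have hinner : ∀ x y : V, ⟪x, y⟫ = ∑ i : Fin 4, ⟪e i, x⟫ * ⟪e i, y⟫ := by
    intro x y
    conv_lhs => rw [← e.sum_repr' x, ← e.sum_repr' y]
    rw [e.orthonormal.inner_sum]
    simp
  have hdiag : ∀ x : V, α x x = 0 := fun x => by have := halt x x; linarith
  have h21 : α (e 1) (e 0) = -l₁ := by rw [halt, h12]
  have h31 : α (e 2) (e 0) = 0 := by rw [halt, h13, neg_zero]
  have h41 : α (e 3) (e 0) = 0 := by rw [halt, h14, neg_zero]
  have h32 : α (e 2) (e 1) = 0 := by rw [halt, h23, neg_zero]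
  have h42 : α (e 3) (e 1) = 0 := by rw [halt, h24, neg_zero]
  have h43 : α (e 3) (e 2) = -l₂ := by rw [halt, h34]
  have hα : α u v = l₁ * (⟪e 0, u⟫ * ⟪e 1, v⟫ - ⟪e 1, u⟫ * ⟪e 0, v⟫)
      + l₂ * (⟪e 2, u⟫ * ⟪e 3, v⟫ - ⟪e 3, u⟫ * ⟪e 2, v⟫) := by
    rw [hαexpand u v]
    simp only [Fin.sum_univ_four, h12, h34, h13, h14, h23, h24, h21, h31, h41, h32, h42, h43,
      hdiag]
    ring
  have hna : ⟪e 0, u⟫^2 + ⟪e 1, u⟫^2 + ⟪e 2, u⟫^2 + ⟪e 3, u⟫^2 = 1 := by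
    have h := hinner u u
    rw [real_inner_self_eq_norm_mul_norm, hu, Fin.sum_univ_four] at h
    nlinarith [h]
  have hnb : ⟪e 0, v⟫^2 + ⟪e 1, v⟫^2 + ⟪e 2, v⟫^2 + ⟪e 3, v⟫^2 = 1 := by
    have h := hinner v v
    rw [real_inner_self_eq_norm_mul_norm, hv, Fin.sum_univ_four] at h
    nlinarith [h]
  have heq : l₁ * (⟪e 0, u⟫ * ⟪e 1, v⟫ - ⟪e 1, u⟫ * ⟪e 0, v⟫)
      + l₂ * (⟪e 2, u⟫ * ⟪e 3, v⟫ - ⟪e 3, u⟫ * ⟪e 2, v⟫) = |l₁| := by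
    rw [← hα, hαuv, max_eq_left hl.le]
  obtain ⟨ha2z, ha3z, hb2z, hb3z⟩ := key_coords l₁ l₂ ⟪e 0, u⟫ ⟪e 1, u⟫ ⟪e 2, u⟫ ⟪e 3, u⟫
    ⟪e 0, v⟫ ⟪e 1, v⟫ ⟪e 2, v⟫ ⟪e 3, v⟫ hna hnb hl heq
  have humem : u ∈ Submodule.span ℝ ({e 0, e 1} : Set V) := by
    rw [Submodule.mem_span_pair]
    refine ⟨⟪e 0, u⟫, ⟪e 1, u⟫, ?_⟩
    conv_rhs => rw [← e.sum_repr' u]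
    rw [Fin.sum_univ_four, ha2z, ha3z, zero_smul, zero_smul, add_zero, add_zero]
  have hvmem : v ∈ Submodule.span ℝ ({e 0, e 1} : Set V) := by
    rw [Submodule.mem_span_pair]
    refine ⟨⟪e 0, v⟫, ⟪e 1, v⟫, ?_⟩
    conv_rhs => rw [← e.sum_repr' v]
    rw [Fin.sum_univ_four, hb2z, hb3z, zero_smul, zero_smul, add_zero, add_zero]
  have hle : Submodule.span ℝ ({u, v} : Set V) ≤ Submodule.span ℝ ({e 0, e 1} : Set V) := by
    rw [Submodule.span_le]
    rintro x (rfl | rfl)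
    · exact humem
    · exact hvmem
  have : FiniteDimensional ℝ (Submodule.span ℝ ({e 0, e 1} : Set V)) :=
    FiniteDimensional.span_of_finite ℝ (Set.toFinite _)
  refine Submodule.eq_of_le_of_finrank_le hle ?_
  rw [span_pair_finrank u v hu hv huv,
    span_pair_finrank (e 0) (e 1) (e.orthonormal.1 0) (e.orthonormal.1 1)
      (e.orthonormal.2 (by decide))]
end

section
/- Let (e₁,e₂,e₃,e₄) be an orthonormal basis of V with associated self-dual basis forms α₁, α₂, α₃ and anti-self-dual basis forms β₁, β₂, β₃. Then for every orthonormal pair (u,v) in V one has α₁(u,v)² + α₂(u,v)² + α₃(u,v)² = 1/2 and β₁(u,v)² + β₂(u,v)² + β₃(u,v)² = 1/2. -/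
open scoped RealInnerProductSpace

/-- The two-form `eᵢ*∧eⱼ*` associated with an orthonormal basis `e`. -/
noncomputable def wedgeForm {V : Type*} [NormedAddCommGroup V] [InnerProductSpace ℝ V]
    (e : OrthonormalBasis (Fin 4) ℝ V) (i j : Fin 4) (u v : V) : ℝ :=
  ⟪u, e i⟫ * ⟪v, e j⟫ - ⟪u, e j⟫ * ⟪v, e i⟫

/-- The self-dual basis forms `α₁, α₂, α₃` associated with an orthonormal basis. -/
noncomputable def sdForm {V : Type*} [NormedAddCommGroup V] [InnerProductSpace ℝ V]
    (e : OrthonormalBasis (Fin 4) ℝ V) : Fin 3 → V → V → ℝ :=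
  ![fun u v => (1 / Real.sqrt 2) * (wedgeForm e 0 1 u v + wedgeForm e 2 3 u v),
    fun u v => (1 / Real.sqrt 2) * (wedgeForm e 0 2 u v - wedgeForm e 1 3 u v),
    fun u v => (1 / Real.sqrt 2) * (wedgeForm e 0 3 u v + wedgeForm e 1 2 u v)]

/-- The anti-self-dual basis forms `β₁, β₂, β₃` associated with an orthonormal basis. -/
noncomputable def asdForm {V : Type*} [NormedAddCommGroup V] [InnerProductSpace ℝ V]
    (e : OrthonormalBasis (Fin 4) ℝ V) : Fin 3 → V → V → ℝ :=
  ![fun u v => (1 / Real.sqrt 2) * (wedgeForm e 0 1 u v - wedgeForm e 2 3 u v),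
    fun u v => (1 / Real.sqrt 2) * (wedgeForm e 0 2 u v + wedgeForm e 1 3 u v),
    fun u v => (1 / Real.sqrt 2) * (wedgeForm e 0 3 u v - wedgeForm e 1 2 u v)]

/-- For every orthonormal pair `(u,v)` in a 4-dimensional real inner product space, the
self-dual coordinates satisfy `Σ αᵢ(u,v)² = 1/2` and the anti-self-dual coordinates satisfy
`Σ βᵢ(u,v)² = 1/2`. -/
theorem sum_sq_sd_asd_eq_half
    {V : Type*} [NormedAddCommGroup V] [InnerProductSpace ℝ V]
    (hdim : Module.finrank ℝ V = 4)
    (e : OrthonormalBasis (Fin 4) ℝ V)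
    (u v : V) (hu : ‖u‖ = 1) (hv : ‖v‖ = 1) (huv : ⟪u, v⟫ = 0) :
    (∑ i : Fin 3, (sdForm e i u v) ^ 2 = 1 / 2) ∧
    (∑ i : Fin 3, (asdForm e i u v) ^ 2 = 1 / 2) := by
  have ha := e.sum_inner_mul_inner u u
  have hb := e.sum_inner_mul_inner v v
  have hab := e.sum_inner_mul_inner u v
  rw [real_inner_self_eq_norm_sq, hu] at ha
  rw [real_inner_self_eq_norm_sq, hv] at hb
  rw [huv] at hab
  simp only [Fin.sum_univ_four, real_inner_comm] at ha hb hab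
  have key : (1 / Real.sqrt 2 : ℝ) ^ 2 = 1 / 2 := by
    rw [div_pow, one_pow, Real.sq_sqrt (by norm_num : (2:ℝ) ≥ 0)]
  constructor <;>
  · simp only [sdForm, asdForm, wedgeForm, Fin.sum_univ_three, Matrix.cons_val_zero,
      Matrix.cons_val_one, Matrix.head_cons, Matrix.cons_val_two, Matrix.tail_cons, mul_pow, key]
    linear_combination ((⟪v, e 0⟫^2 + ⟪v, e 1⟫^2 + ⟪v, e 2⟫^2 + ⟪v, e 3⟫^2 : ℝ) / 2) * ha
      + (1 / 2 : ℝ) * hb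
      - ((⟪u, e 0⟫*⟪v, e 0⟫ + ⟪u, e 1⟫*⟪v, e 1⟫ + ⟪u, e 2⟫*⟪v, e 2⟫ + ⟪u, e 3⟫*⟪v, e 3⟫ : ℝ) / 2) * hab
end

section
/- Let (e₁,e₂,e₃,e₄) be an orthonormal basis of V with associated self-dual basis forms α₁, α₂, α₃ and anti-self-dual basis forms β₁, β₂, β₃. For every (a₁,a₂,a₃,b₁,b₂,b₃) ∈ ℝ⁶ with a₁² + a₂² + a₃² = 1/2 and b₁² + b₂² + b₃² = 1/2, there exists an orthonormal pair (u,v) in V such that αᵢ(u,v) = aᵢ and βᵢ(u,v) = bᵢ for i = 1,2,3. (Together with the identities Σαᵢ(u,v)² = Σβᵢ(u,v)² = 1/2, this identifies G(2,V) with S²(1/√2) × S²(1/√2).) -/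
/-!
Identify `V` with the quaternions `ℍ` through the basis `e`. For `u = p` and `v = q` one finds
`√2 α(u, v) = Im (q p̄)` and `√2 β(u, v) = Im (p̄ q)`. Regard `A = √2 a` and `B = √2 b` as unit
imaginary quaternions and choose a unit quaternion `p` with `A p = p B`, i.e. a rotation of the
sphere of imaginary units taking `B` to `A`. Then `q = A p` is a unit vector orthogonal to `p`
with `q p̄ = A` and `p̄ q = p̄ p B = B`.
-/

open scoped RealInnerProductSpace

open scoped Quaternion

namespace Quaternion

def ofImVec (c : Fin 3 → ℝ) : ℍ := ⟨0, c 0, c 1, c 2⟩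

theorem normSq_ofImVec (c : Fin 3 → ℝ) : normSq (ofImVec c) = ∑ i, c i ^ 2 := by
  rw [normSq_def', Fin.sum_univ_three]
  simp [ofImVec]

theorem mul_eq_neg_mul_of_inner_eq_zero {A p : ℍ} (hA : A.re = 0) (hp : p.re = 0)
    (h : ⟪A, p⟫ = 0) : A * p = -(p * A) := by
  rw [inner_def] at h
  ext <;> simp only [re_mul, imI_mul, imJ_mul, imK_mul, re_neg, imI_neg, imJ_neg, imK_neg, re_star,
    imI_star, imJ_star, imK_star, hA, hp] at h ⊢ <;> linarith

/-- Conjugate imaginary quaternions: `p = |B|² - A B` works unless `B = -A`, in which case any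
nonzero imaginary `p ⊥ A` anticommutes with `A`. -/
theorem exists_ne_zero_mul_eq_mul {A B : ℍ} (hA : A.re = 0) (hB : B.re = 0)
    (hAB : normSq A = normSq B) : ∃ p : ℍ, p ≠ 0 ∧ A * p = p * B := by
  by_cases hsum : A + B = 0
  · set K := Submodule.span ℝ (Set.range ![1, A])
    have hK : 0 < Module.finrank ℝ Kᗮ := by
      have h₁ := K.finrank_add_finrank_orthogonal
      have h₂ : Module.finrank ℝ K ≤ 2 := finrank_range_le_card _
      rw [finrank_eq_four] at h₁
      omega
    obtain ⟨p, hpK, hp0⟩ :=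
      Submodule.exists_mem_ne_zero_of_ne_bot (Submodule.one_le_finrank_iff.mp hK)
    have hp : p.re = 0 := by
      simpa [inner_def] using K.inner_right_of_mem_orthogonal (Submodule.subset_span ⟨0, rfl⟩) hpK
    have hAp : ⟪A, p⟫ = 0 := K.inner_right_of_mem_orthogonal (Submodule.subset_span ⟨1, rfl⟩) hpK
    refine ⟨p, hp0, ?_⟩
    rw [mul_eq_neg_mul_of_inner_eq_zero hA hp hAp, eq_neg_of_add_eq_zero_right hsum, mul_neg]
  · have hA2 : A * A = -normSq B := by rw [← sq, sq_eq_neg_normSq.mpr hA, hAB]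
    have hB2 : B * B = -normSq B := by rw [← sq, sq_eq_neg_normSq.mpr hB]
    have hleft : A * (normSq B - A * B) = normSq B • (A + B) := by
      rw [mul_sub, ← mul_assoc, hA2, neg_mul, sub_neg_eq_add, mul_coe_eq_smul, coe_mul_eq_smul,
        smul_add]
    have hright : (normSq B - A * B) * B = normSq B • (A + B) := by
      rw [sub_mul, mul_assoc, hB2, mul_neg, sub_neg_eq_add, mul_coe_eq_smul, coe_mul_eq_smul,
        smul_add, add_comm]
    refine ⟨normSq B - A * B, fun h => hsum ?_, hleft.trans hright.symm⟩
    rw [h, zero_mul, eq_comm, smul_eq_zero, normSq_eq_zero] at hright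
    rcases hright with hB0 | hsum0
    · rw [hB0, map_zero, normSq_eq_zero] at hAB
      rw [hAB, hB0, add_zero]
    · exact hsum0

theorem exists_norm_eq_one_mul_eq_mul {A B : ℍ} (hA : A.re = 0) (hB : B.re = 0)
    (hAB : normSq A = normSq B) : ∃ p : ℍ, ‖p‖ = 1 ∧ A * p = p * B := by
  obtain ⟨p, hp0, hp⟩ := exists_ne_zero_mul_eq_mul hA hB hAB
  refine ⟨‖p‖⁻¹ • p, norm_smul_inv_norm hp0, ?_⟩
  rw [mul_smul_comm, smul_mul_assoc, hp]

end Quaternion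

section

open Quaternion

variable {V : Type*} [NormedAddCommGroup V] [InnerProductSpace ℝ V]

noncomputable def OrthonormalBasis.quaternionIsometry (e : OrthonormalBasis (Fin 4) ℝ V) :
    ℍ ≃ₗᵢ[ℝ] V :=
  linearIsometryEquivTuple.trans e.repr.symm

variable (e : OrthonormalBasis (Fin 4) ℝ V)

theorem OrthonormalBasis.inner_quaternionIsometry (p : ℍ) (i : Fin 4) :
    ⟪e.quaternionIsometry p, e i⟫ = ![p.re, p.imI, p.imJ, p.imK] i := by
  rw [real_inner_comm, ← e.repr_apply_apply]
  simp [OrthonormalBasis.quaternionIsometry]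

theorem sdForm_quaternionIsometry (p q : ℍ) (i : Fin 3) :
    sdForm e i (e.quaternionIsometry p) (e.quaternionIsometry q) =
      ![(q * star p).imI, (q * star p).imJ, (q * star p).imK] i / √2 := by
  fin_cases i <;>
    simp only [sdForm, wedgeForm, e.inner_quaternionIsometry, Fin.zero_eta, Fin.mk_one,
      Fin.reduceFinMk, Matrix.cons_val, imI_mul, imJ_mul, imK_mul, re_star, imI_star, imJ_star,
      imK_star] <;> ring

theorem asdForm_quaternionIsometry (p q : ℍ) (i : Fin 3) :
    asdForm e i (e.quaternionIsometry p) (e.quaternionIsometry q) =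
      ![(star p * q).imI, (star p * q).imJ, (star p * q).imK] i / √2 := by
  fin_cases i <;>
    simp only [asdForm, wedgeForm, e.inner_quaternionIsometry, Fin.zero_eta, Fin.mk_one,
      Fin.reduceFinMk, Matrix.cons_val, imI_mul, imJ_mul, imK_mul, re_star, imI_star, imJ_star,
      imK_star] <;> ring

end

open Quaternion in
theorem grassmannian_surjects_onto_spheres_general
    {V : Type*} [NormedAddCommGroup V] [InnerProductSpace ℝ V]
    (e : OrthonormalBasis (Fin 4) ℝ V)
    (a b : Fin 3 → ℝ)
    (ha : ∑ i : Fin 3, (a i) ^ 2 = 1 / 2) (hb : ∑ i : Fin 3, (b i) ^ 2 = 1 / 2) :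
    ∃ u v : V, ‖u‖ = 1 ∧ ‖v‖ = 1 ∧ ⟪u, v⟫ = 0 ∧
      ∀ i : Fin 3, sdForm e i u v = a i ∧ asdForm e i u v = b i := by
  have normSq_ofImVec_sqrt_two_smul (c : Fin 3 → ℝ) (hc : ∑ i, c i ^ 2 = 1 / 2) :
      normSq (ofImVec (√2 • c)) = 1 := by
    simp only [normSq_ofImVec, Pi.smul_apply, smul_eq_mul, mul_pow, ← Finset.mul_sum, hc,
      Real.sq_sqrt zero_le_two]
    norm_num
  set A := ofImVec (√2 • a)
  set B := ofImVec (√2 • b)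
  have hA : normSq A = 1 := normSq_ofImVec_sqrt_two_smul a ha
  obtain ⟨p, hp, hApB⟩ := exists_norm_eq_one_mul_eq_mul (A := A) (B := B) rfl rfl
    (hA.trans (normSq_ofImVec_sqrt_two_smul b hb).symm)
  have hpp : normSq p = 1 := by rw [normSq_eq_norm_mul_self, hp, mul_one]
  have hsd : A * p * star p = A := by rw [mul_assoc, self_mul_star, hpp, coe_one, mul_one]
  have hasd : star p * (A * p) = B := by
    rw [hApB, ← mul_assoc, star_mul_self, hpp, coe_one, one_mul]
  refine ⟨e.quaternionIsometry p, e.quaternionIsometry (A * p),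
    by rw [LinearIsometryEquiv.norm_map, hp], ?_, ?_, fun i => ⟨?_, ?_⟩⟩
  · rw [LinearIsometryEquiv.norm_map, norm_mul, hp, mul_one, norm_eq_sqrt_real_inner, inner_self,
      hA, Real.sqrt_one]
  · rw [LinearIsometryEquiv.inner_map_map, real_inner_comm, inner_def, hsd]
    rfl
  · rw [sdForm_quaternionIsometry, hsd]
    fin_cases i <;> simp [A, ofImVec]
  · rw [asdForm_quaternionIsometry, hasd]
    fin_cases i <;> simp [B, ofImVec]

/-- Every point of `S²(1/√2) × S²(1/√2)` is realized by an orthonormal pair: given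
`(a₁,a₂,a₃,b₁,b₂,b₃)` with `Σ aᵢ² = Σ bᵢ² = 1/2`, there is an orthonormal pair `(u,v)`
with `αᵢ(u,v) = aᵢ` and `βᵢ(u,v) = bᵢ` for all `i`. -/
theorem grassmannian_surjects_onto_spheres
    {V : Type*} [NormedAddCommGroup V] [InnerProductSpace ℝ V]
    (hdim : Module.finrank ℝ V = 4)
    (e : OrthonormalBasis (Fin 4) ℝ V)
    (a b : Fin 3 → ℝ)
    (ha : ∑ i : Fin 3, (a i) ^ 2 = 1 / 2) (hb : ∑ i : Fin 3, (b i) ^ 2 = 1 / 2) :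
    ∃ u v : V, ‖u‖ = 1 ∧ ‖v‖ = 1 ∧ ⟪u, v⟫ = 0 ∧
      ∀ i : Fin 3, sdForm e i u v = a i ∧ asdForm e i u v = b i :=
  grassmannian_surjects_onto_spheres_general e a b ha hb
end

section
/- Let K : V → V be a skew-adjoint linear map on a 4-dimensional real inner product space V and let α(x,y) = ⟨Kx, y⟩ be its associated alternating bilinear form. If α is calibrating (comass(α) = 1) and det K = 1 (equivalently, the Pfaffian λ₁λ₂ of α equals ±1, i.e. α is self-dual or anti-self-dual), then K is an isometry: ⟨Kx, Ky⟩ = ⟨x, y⟩ for all x, y ∈ V; that is, a self-dual or anti-self-dual calibrating form is induced by an element of the orthogonal group O(V). -/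
open scoped RealInnerProductSpace

/-- A self-dual or anti-self-dual calibrating form on a 4-dimensional real inner product
space is induced by an orthogonal transformation: if `K` is skew-adjoint, the associated
form `α(x,y) = ⟪Kx, y⟫` has comass 1, and `det K = 1` (i.e. the Pfaffian `λ₁λ₂ = ±1`),
then `K` is an isometry. -/
theorem calibrating_selfdual_isometry
    {V : Type*} [NormedAddCommGroup V] [InnerProductSpace ℝ V]
    (hdim : Module.finrank ℝ V = 4)
    (K : V →ₗ[ℝ] V) (hskew : ∀ x y : V, ⟪K x, y⟫ = -⟪x, K y⟫)
    (hcal : IsLUB {r : ℝ | ∃ u v : V, ‖u‖ = 1 ∧ ‖v‖ = 1 ∧ ⟪u, v⟫ = 0 ∧ ⟪K u, v⟫ = r} 1)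
    (hdet : LinearMap.det K = 1) :
    ∀ x y : V, ⟪K x, K y⟫ = ⟪x, y⟫ := by
  have hfin : FiniteDimensional ℝ V := FiniteDimensional.of_finrank_pos (by rw [hdim]; norm_num)
  -- T = -K², which is symmetric
  set T : V →ₗ[ℝ] V := -(K ∘ₗ K) with hTdef
  have hKK : ∀ x y : V, ⟪T x, y⟫ = ⟪K x, K y⟫ := by
    intro x y
    simp only [hTdef, LinearMap.neg_apply, LinearMap.comp_apply, inner_neg_left]
    rw [hskew (K x) y]
    rw [hskew x (K y)]
    ring
  have hTsym : T.IsSymmetric := by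
    intro x y
    rw [hKK x y, hskew x (K y)]
    simp only [hTdef, LinearMap.neg_apply, LinearMap.comp_apply, inner_neg_right]
  -- operator norm bound from the comass hypothesis
  have hKnorm : ∀ u : V, ‖u‖ = 1 → ‖K u‖ ≤ 1 := by
    intro u hu
    rcases eq_or_ne (K u) 0 with h | h
    · simp [h]
    · have hn : ‖K u‖ ≠ 0 := norm_ne_zero_iff.mpr h
      have huKu : ⟪u, K u⟫ = 0 := by
        have h1 := hskew u u
        have h2 : ⟪u, K u⟫ = ⟪K u, u⟫ := (real_inner_comm (K u) u)
        linarith [h1, h2.symm ▸ h1]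
      refine hcal.1 ⟨u, ‖K u‖⁻¹ • K u, hu, ?_, ?_, ?_⟩
      · rw [norm_smul, norm_inv, norm_norm, inv_mul_cancel₀ hn]
      · rw [real_inner_smul_right, huKu, mul_zero]
      · rw [real_inner_smul_right, real_inner_self_eq_norm_sq]
        field_simp
  -- spectral decomposition of T
  let b := hTsym.eigenvectorBasis hdim
  let μ : Fin 4 → ℝ := hTsym.eigenvalues hdim
  have hb : ∀ i, T (b i) = μ i • b i := fun i => by
    have := hTsym.apply_eigenvectorBasis hdim i
    exact_mod_cast this
  have hbnorm : ∀ i, ‖b i‖ = 1 := fun i => b.orthonormal.1 i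
  have hμ_eq : ∀ i, μ i = ‖K (b i)‖ ^ 2 := by
    intro i
    have h1 : ⟪T (b i), b i⟫ = μ i := by
      rw [hb i, real_inner_smul_left, real_inner_self_eq_norm_sq, hbnorm i]
      ring
    rw [← h1, hKK, real_inner_self_eq_norm_sq]
  have hμ_nonneg : ∀ i, 0 ≤ μ i := fun i => by rw [hμ_eq i]; positivity
  have hμ_le : ∀ i, μ i ≤ 1 := by
    intro i
    rw [hμ_eq i]
    have := hKnorm (b i) (hbnorm i)
    nlinarith [norm_nonneg (K (b i))]
  -- determinant of T equals product of eigenvalues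
  have hdetT : LinearMap.det T = 1 := by
    have : T = (-1 : ℝ) • (K ∘ₗ K) := by
      rw [hTdef]; ext x; simp
    rw [this, LinearMap.det_smul, hdim, LinearMap.det_comp, hdet]
    norm_num
  have hprod : ∏ i, μ i = 1 := by
    have hmat : LinearMap.toMatrix b.toBasis b.toBasis T = Matrix.diagonal μ := by
      ext i j
      rw [LinearMap.toMatrix_apply, OrthonormalBasis.coe_toBasis, hb j, map_smul,
        ← OrthonormalBasis.coe_toBasis, Module.Basis.repr_self]
      rcases eq_or_ne i j with rfl | hij
      · simp
      · simp [Matrix.diagonal_apply_ne _ hij, Finsupp.single_apply, Ne.symm hij]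
    have := LinearMap.det_toMatrix b.toBasis T
    rw [hmat, Matrix.det_diagonal] at this
    rw [this, hdetT]
  -- each eigenvalue equals 1
  have hμ_one : ∀ i, μ i = 1 := by
    intro i
    have hrest : ∏ j ∈ Finset.univ.erase i, μ j ≤ 1 :=
      Finset.prod_le_one (fun j _ => hμ_nonneg j) (fun j _ => hμ_le j)
    have hrest0 : 0 ≤ ∏ j ∈ Finset.univ.erase i, μ j :=
      Finset.prod_nonneg (fun j _ => hμ_nonneg j)
    have hsplit : μ i * ∏ j ∈ Finset.univ.erase i, μ j = 1 := by
      rw [Finset.mul_prod_erase Finset.univ μ (Finset.mem_univ i), hprod]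
    nlinarith [hμ_le i, hμ_nonneg i]
  -- T = id
  have hT_id : T = LinearMap.id := by
    apply b.toBasis.ext
    intro i
    rw [OrthonormalBasis.coe_toBasis, hb i, hμ_one i, one_smul, LinearMap.id_apply]
  intro x y
  have hTy : T y = y := by rw [hT_id]; rfl
  have hKKy : K (K y) = -y := by
    have : -(K (K y)) = y := hTy
    exact neg_eq_iff_eq_neg.mp this
  rw [hskew x (K y), hKKy, inner_neg_right, neg_neg]
end

section
/- Let J : V → V be a skew-adjoint linear isometry of a 4-dimensional real inner product space V (⟨Jx, y⟩ = −⟨x, Jy⟩ and ⟨Jx, Jy⟩ = ⟨x, y⟩ for all x, y), and let α(x,y) = ⟨Jx, y⟩ be its associated alternating bilinear form. Then det J = 1 and comass(α) = 1; that is, a form induced by a skew-adjoint isometry is a calibrating form which is self-dual or anti-self-dual. -/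
open scoped RealInnerProductSpace

/-- A form induced by a skew-adjoint isometry `J` of a 4-dimensional real inner product
space is a self-dual or anti-self-dual calibrating form: `det J = 1` and the comass of
`α(x,y) = ⟪Jx, y⟫` equals 1. -/
theorem skewAdjoint_isometry_form_calibrating
    {V : Type*} [NormedAddCommGroup V] [InnerProductSpace ℝ V]
    (hdim : Module.finrank ℝ V = 4)
    (J : V →ₗ[ℝ] V) (hskew : ∀ x y : V, ⟪J x, y⟫ = -⟪x, J y⟫)
    (hiso : ∀ x y : V, ⟪J x, J y⟫ = ⟪x, y⟫) :
    LinearMap.det J = 1 ∧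
    IsLUB {r : ℝ | ∃ u v : V, ‖u‖ = 1 ∧ ‖v‖ = 1 ∧ ⟪u, v⟫ = 0 ∧ ⟪J u, v⟫ = r} 1 := by
  haveI : FiniteDimensional ℝ V :=
    Module.finite_of_finrank_pos (by rw [hdim]; norm_num)
  haveI : Nontrivial V :=
    Module.nontrivial_of_finrank_pos (R := ℝ) (by rw [hdim]; norm_num)
  -- J ∘ J = -1
  have hJJ : (J * J : V →ₗ[ℝ] V) = -1 := by
    ext x
    apply ext_inner_right ℝ
    intro y
    have : ⟪J (J x), y⟫ = -⟪J x, J y⟫ := hskew (J x) y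
    simp only [Module.End.mul_apply, this, hiso]
    simp
  -- determinant part
  have hdet2 : LinearMap.det J * LinearMap.det J = 1 := by
    have := congrArg LinearMap.det hJJ
    rw [map_mul] at this
    rw [this]
    have : (-1 : V →ₗ[ℝ] V) = (-1 : ℝ) • (1 : V →ₗ[ℝ] V) := by simp
    rw [this, LinearMap.det_smul, hdim]
    norm_num
  -- family L t = cos t • 1 + sin t • J has nonzero determinant
  have hLdet : ∀ t : ℝ,
      LinearMap.det (Real.cos t • (1 : V →ₗ[ℝ] V) + Real.sin t • J) ≠ 0 := by
    intro t
    set c := Real.cos t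
    set s := Real.sin t
    have key : (c • (1 : V →ₗ[ℝ] V) - s • J) * (c • 1 + s • J) = 1 := by
      have expand : (c • (1 : V →ₗ[ℝ] V) - s • J) * (c • 1 + s • J)
          = (c * c) • ((1 : V →ₗ[ℝ] V) * 1) + (c * s) • (1 * J)
            - ((s * c) • (J * 1) + (s * s) • (J * J)) := by
        rw [sub_mul, mul_add, mul_add, smul_mul_smul_comm, smul_mul_smul_comm,
          smul_mul_smul_comm, smul_mul_smul_comm]
      rw [expand, hJJ]
      have hcs : c * c + s * s = 1 := by
        have := Real.sin_sq_add_cos_sq t; nlinarith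
      calc (c * c) • ((1 : V →ₗ[ℝ] V) * 1) + (c * s) • (1 * J)
            - ((s * c) • (J * 1) + (s * s) • (-1 : V →ₗ[ℝ] V))
          = (c * c + s * s) • (1 : V →ₗ[ℝ] V) := by
            simp only [mul_one, one_mul]; module
        _ = 1 := by rw [hcs, one_smul]
    intro h0
    have := congrArg LinearMap.det key
    rw [map_mul, h0, mul_zero, map_one] at this
    exact one_ne_zero this.symm
  have hdetpos : 0 < LinearMap.det J := by
    by_contra hle
    push_neg at hle
    have hlt : LinearMap.det J < 0 := by
      rcases lt_or_eq_of_le hle with h | h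
      · exact h
      · exfalso; rw [h] at hdet2; simp at hdet2
    -- continuous determinant family
    let b := Module.finBasis ℝ V
    let f : ℝ → ℝ := fun t =>
      (Real.cos t • LinearMap.toMatrix b b 1 + Real.sin t • LinearMap.toMatrix b b J).det
    have hf : Continuous f := by
      apply Continuous.matrix_det
      exact (Real.continuous_cos.smul continuous_const).add
        (Real.continuous_sin.smul continuous_const)
    have hfeq : ∀ t, f t = LinearMap.det (Real.cos t • (1 : V →ₗ[ℝ] V) + Real.sin t • J) := by
      intro t
      rw [← LinearMap.det_toMatrix b]
      simp [f, map_add, map_smul]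
    have hf0 : f 0 = 1 := by rw [hfeq]; simp
    have hfpi : f (Real.pi / 2) = LinearMap.det J := by rw [hfeq]; simp
    have h0mem : (0 : ℝ) ∈ Set.Icc (f (Real.pi / 2)) (f 0) := by
      rw [hf0, hfpi]; exact ⟨le_of_lt hlt, zero_le_one⟩
    obtain ⟨t, _, ht⟩ := intermediate_value_Icc' (le_of_lt (by positivity : (0:ℝ) < Real.pi / 2))
      hf.continuousOn h0mem
    rw [hfeq] at ht
    exact hLdet t ht
  have hdet1 : LinearMap.det J = 1 := by
    rcases mul_self_eq_one_iff.mp hdet2 with h | h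
    · exact h
    · exfalso; rw [h] at hdetpos; norm_num at hdetpos
  refine ⟨hdet1, ?_⟩
  have hnorm : ∀ x : V, ‖J x‖ = ‖x‖ := by
    intro x
    have h2 : ⟪J x, J x⟫ = ⟪x, x⟫ := hiso x x
    rw [real_inner_self_eq_norm_sq, real_inner_self_eq_norm_sq] at h2
    nlinarith [norm_nonneg (J x), norm_nonneg x]
  constructor
  · -- 1 is an upper bound
    rintro r ⟨u, v, hu, hv, -, hr⟩
    calc r = ⟪J u, v⟫ := hr.symm
      _ ≤ ‖J u‖ * ‖v‖ := real_inner_le_norm _ _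
      _ = 1 := by rw [hnorm, hu, hv, one_mul]
  · -- 1 is the least upper bound: 1 is attained
    intro b hb
    obtain ⟨x, hx⟩ := exists_ne (0 : V)
    set u := ‖x‖⁻¹ • x with hu_def
    have hu : ‖u‖ = 1 := norm_smul_inv_norm hx
    have huv : ⟪u, J u⟫ = 0 := by
      have h1 : ⟪J u, u⟫ = -⟪u, J u⟫ := hskew u u
      have h2 : ⟪J u, u⟫ = ⟪u, J u⟫ := real_inner_comm _ _
      linarith
    refine hb ⟨u, J u, hu, by rw [hnorm]; exact hu, huv, ?_⟩
    rw [hiso, real_inner_self_eq_norm_sq, hu]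
    norm_num
end

section
/- Let V be an oriented 4-dimensional real inner product space. Let J be a self-dual orthogonal complex structure on V and L an anti-self-dual orthogonal complex structure on V. Then J and L commute, JL = LJ, and the composition JL is self-adjoint: ⟨JLx, y⟩ = ⟨x, JLy⟩ for all x, y ∈ V. -/
open scoped RealInnerProductSpace

set_option maxHeartbeats 2000000 in
/-- On an oriented 4-dimensional real inner product space, a self-dual orthogonal complex
structure `J` and an anti-self-dual orthogonal complex structure `L` commute, and `JL` is
self-adjoint. -/
theorem selfdual_antiselfdual_commute
    {V : Type*} [NormedAddCommGroup V] [InnerProductSpace ℝ V]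
    (hdim : Module.finrank ℝ V = 4)
    (o : Orientation ℝ V (Fin 4))
    (J L : V →ₗ[ℝ] V)
    (hJ2 : ∀ x : V, J (J x) = -x) (hJo : ∀ x y : V, ⟪J x, J y⟫ = ⟪x, y⟫)
    (hL2 : ∀ x : V, L (L x) = -x) (hLo : ∀ x y : V, ⟪L x, L y⟫ = ⟪x, y⟫)
    (hJsd : ∀ e : OrthonormalBasis (Fin 4) ℝ V, e.toBasis.orientation = o →
      ⟪J (e 0), e 1⟫ * ⟪J (e 2), e 3⟫ - ⟪J (e 0), e 2⟫ * ⟪J (e 1), e 3⟫ +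
        ⟪J (e 0), e 3⟫ * ⟪J (e 1), e 2⟫ = 1)
    (hLasd : ∀ e : OrthonormalBasis (Fin 4) ℝ V, e.toBasis.orientation = o →
      ⟪L (e 0), e 1⟫ * ⟪L (e 2), e 3⟫ - ⟪L (e 0), e 2⟫ * ⟪L (e 1), e 3⟫ +
        ⟪L (e 0), e 3⟫ * ⟪L (e 1), e 2⟫ = -1) :
    (∀ x : V, J (L x) = L (J x)) ∧ (∀ x y : V, ⟪J (L x), y⟫ = ⟪x, J (L y)⟫) := by
  have : FiniteDimensional ℝ V := FiniteDimensional.of_finrank_eq_succ hdim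
  have hJskew : ∀ x y : V, ⟪J x, y⟫ = -⟪x, J y⟫ := by
    intro x y
    have h := hJo x (J y)
    rw [hJ2 y, inner_neg_right] at h
    linarith
  have hLskew : ∀ x y : V, ⟪L x, y⟫ = -⟪x, L y⟫ := by
    intro x y
    have h := hLo x (L y)
    rw [hL2 y, inner_neg_right] at h
    linarith
  obtain ⟨e, heo⟩ : ∃ e : OrthonormalBasis (Fin 4) ℝ V, e.toBasis.orientation = o :=
    ⟨o.finOrthonormalBasis (by norm_num) hdim, o.finOrthonormalBasis_orientation _ _⟩
  obtain ⟨a, ha⟩ : ∃ a : Fin 4 → Fin 4 → ℝ, ∀ i j, a i j = ⟪J (e i), e j⟫ :=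
    ⟨fun i j => ⟪J (e i), e j⟫, fun _ _ => rfl⟩
  obtain ⟨b, hb⟩ : ∃ b : Fin 4 → Fin 4 → ℝ, ∀ i j, b i j = ⟪L (e i), e j⟫ :=
    ⟨fun i j => ⟪L (e i), e j⟫, fun _ _ => rfl⟩
  have hskA : ∀ i j : Fin 4, a j i = -a i j := by
    intro i j
    rw [ha, ha, hJskew, real_inner_comm]
  have hskB : ∀ i j : Fin 4, b j i = -b i j := by
    intro i j
    rw [hb, hb, hLskew, real_inner_comm]
  have keyA : ∀ i j : Fin 4, (∑ k, a i k * a j k) = if i = j then 1 else 0 := by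
    intro i j
    calc ∑ k, a i k * a j k
        = ∑ k, ⟪J (e i), e k⟫ * ⟪e k, J (e j)⟫ := by
          refine Finset.sum_congr rfl fun k _ => ?_
          rw [real_inner_comm (J (e j)) (e k), ha, ha]
      _ = ⟪J (e i), J (e j)⟫ := e.sum_inner_mul_inner _ _
      _ = ⟪e i, e j⟫ := hJo _ _
      _ = if i = j then 1 else 0 := orthonormal_iff_ite.mp e.orthonormal i j
  have keyB : ∀ i j : Fin 4, (∑ k, b i k * b j k) = if i = j then 1 else 0 := by
    intro i j
    calc ∑ k, b i k * b j k
        = ∑ k, ⟪L (e i), e k⟫ * ⟪e k, L (e j)⟫ := by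
          refine Finset.sum_congr rfl fun k _ => ?_
          rw [real_inner_comm (L (e j)) (e k), hb, hb]
      _ = ⟪L (e i), L (e j)⟫ := e.sum_inner_mul_inner _ _
      _ = ⟪e i, e j⟫ := hLo _ _
      _ = if i = j then 1 else 0 := orthonormal_iff_ite.mp e.orthonormal i j
  have pfA : a 0 1 * a 2 3 - a 0 2 * a 1 3 + a 0 3 * a 1 2 = 1 := by
    simp only [ha]; exact hJsd e heo
  have pfB : b 0 1 * b 2 3 - b 0 2 * b 1 3 + b 0 3 * b 1 2 = -1 := by
    simp only [hb]; exact hLasd e heo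
  have dA : ∀ i : Fin 4, a i i = 0 := fun i => by have := hskA i i; linarith
  have dB : ∀ i : Fin 4, b i i = 0 := fun i => by have := hskB i i; linarith
  have eA00 := keyA 0 0; have eA11 := keyA 1 1; have eA22 := keyA 2 2; have eA33 := keyA 3 3
  have eB00 := keyB 0 0; have eB11 := keyB 1 1; have eB22 := keyB 2 2; have eB33 := keyB 3 3
  have rA10 : a 1 0 = -a 0 1 := hskA 0 1
  have rA20 : a 2 0 = -a 0 2 := hskA 0 2
  have rA30 : a 3 0 = -a 0 3 := hskA 0 3
  have rA21 : a 2 1 = -a 1 2 := hskA 1 2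
  have rA31 : a 3 1 = -a 1 3 := hskA 1 3
  have rA32 : a 3 2 = -a 2 3 := hskA 2 3
  have rB10 : b 1 0 = -b 0 1 := hskB 0 1
  have rB20 : b 2 0 = -b 0 2 := hskB 0 2
  have rB30 : b 3 0 = -b 0 3 := hskB 0 3
  have rB21 : b 2 1 = -b 1 2 := hskB 1 2
  have rB31 : b 3 1 = -b 1 3 := hskB 1 3
  have rB32 : b 3 2 = -b 2 3 := hskB 2 3
  have dA0 : a 0 0 = 0 := dA 0
  have dA1 : a 1 1 = 0 := dA 1
  have dA2 : a 2 2 = 0 := dA 2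
  have dA3 : a 3 3 = 0 := dA 3
  have dB0 : b 0 0 = 0 := dB 0
  have dB1 : b 1 1 = 0 := dB 1
  have dB2 : b 2 2 = 0 := dB 2
  have dB3 : b 3 3 = 0 := dB 3
  simp only [Fin.sum_univ_four, dA0, dA1, dA2, dA3, rA10, rA20, rA30, rA21, rA31, rA32,
    if_pos rfl] at eA00 eA11 eA22 eA33
  norm_num at eA00 eA11 eA22 eA33
  simp only [Fin.sum_univ_four, dB0, dB1, dB2, dB3, rB10, rB20, rB30, rB21, rB31, rB32,
    if_pos rfl] at eB00 eB11 eB22 eB33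
  norm_num at eB00 eB11 eB22 eB33
  have hsA : (a 0 1 - a 2 3)^2 + (a 0 2 + a 1 3)^2 + (a 0 3 - a 1 2)^2 = 0 := by
    linear_combination (eA00 + eA11 + eA22 + eA33)/2 - 2*pfA
  have hsB : (b 0 1 + b 2 3)^2 + (b 0 2 - b 1 3)^2 + (b 0 3 + b 1 2)^2 = 0 := by
    linear_combination (eB00 + eB11 + eB22 + eB33)/2 + 2*pfB
  have hA1 : a 2 3 = a 0 1 := by
    have h1 : (a 0 1 - a 2 3)^2 = 0 := by
      have n2 := sq_nonneg (a 0 2 + a 1 3); have n3 := sq_nonneg (a 0 3 - a 1 2); have n1 := sq_nonneg (a 0 1 - a 2 3)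
      linarith [hsA]
    have := sq_eq_zero_iff.mp h1
    linarith [this]
  have hA2 : a 1 3 = -a 0 2 := by
    have h1 : (a 0 2 + a 1 3)^2 = 0 := by
      have n2 := sq_nonneg (a 0 1 - a 2 3); have n3 := sq_nonneg (a 0 3 - a 1 2); have n1 := sq_nonneg (a 0 2 + a 1 3)
      linarith [hsA]
    have := sq_eq_zero_iff.mp h1
    linarith [this]
  have hA3 : a 1 2 = a 0 3 := by
    have h1 : (a 0 3 - a 1 2)^2 = 0 := by
      have n2 := sq_nonneg (a 0 1 - a 2 3); have n3 := sq_nonneg (a 0 2 + a 1 3); have n1 := sq_nonneg (a 0 3 - a 1 2)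
      linarith [hsA]
    have := sq_eq_zero_iff.mp h1
    linarith [this]
  have hB1 : b 2 3 = -b 0 1 := by
    have h1 : (b 0 1 + b 2 3)^2 = 0 := by
      have n2 := sq_nonneg (b 0 2 - b 1 3); have n3 := sq_nonneg (b 0 3 + b 1 2); have n1 := sq_nonneg (b 0 1 + b 2 3)
      linarith [hsB]
    have := sq_eq_zero_iff.mp h1
    linarith [this]
  have hB2 : b 1 3 = b 0 2 := by
    have h1 : (b 0 2 - b 1 3)^2 = 0 := by
      have n2 := sq_nonneg (b 0 1 + b 2 3); have n3 := sq_nonneg (b 0 3 + b 1 2); have n1 := sq_nonneg (b 0 2 - b 1 3)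
      linarith [hsB]
    have := sq_eq_zero_iff.mp h1
    linarith [this]
  have hB3 : b 1 2 = -b 0 3 := by
    have h1 : (b 0 3 + b 1 2)^2 = 0 := by
      have n2 := sq_nonneg (b 0 1 + b 2 3); have n3 := sq_nonneg (b 0 2 - b 1 3); have n1 := sq_nonneg (b 0 3 + b 1 2)
      linarith [hsB]
    have := sq_eq_zero_iff.mp h1
    linarith [this]
  have main : ∀ i j : Fin 4, (∑ k, b i k * a j k) = ∑ k, a i k * b j k := by
    intro i j
    fin_cases i <;> fin_cases j <;>
      simp only [Fin.sum_univ_four, Fin.isValue, Fin.mk_zero, Fin.mk_one, Fin.reduceFinMk, dA0, dA1, dA2, dA3, dB0, dB1, dB2, dB3,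
        rA10, rA20, rA30, rA21, rA31, rA32, rB10, rB20, rB30, rB21, rB31, rB32,
        hA1, hA2, hA3, hB1, hB2, hB3] <;> ring
  have comm_basis : ∀ i : Fin 4, J (L (e i)) = L (J (e i)) := by
    intro i
    have hx : ∀ x : V, x = ∑ j, ⟪e j, x⟫ • e j := fun x => (e.sum_repr' x).symm
    rw [hx (J (L (e i))), hx (L (J (e i)))]
    refine Finset.sum_congr rfl fun j _ => ?_
    congr 1
    have hJL : ⟪e j, J (L (e i))⟫ = -∑ k, b i k * a j k := by
      rw [real_inner_comm, hJskew (L (e i)) (e j), ← e.sum_inner_mul_inner (L (e i)) (J (e j))]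
      congr 1
      refine Finset.sum_congr rfl fun k _ => ?_
      rw [real_inner_comm (J (e j)) (e k), ha, hb]
    have hLJ : ⟪e j, L (J (e i))⟫ = -∑ k, a i k * b j k := by
      rw [real_inner_comm, hLskew (J (e i)) (e j), ← e.sum_inner_mul_inner (J (e i)) (L (e j))]
      congr 1
      refine Finset.sum_congr rfl fun k _ => ?_
      rw [real_inner_comm (L (e j)) (e k), ha, hb]
    rw [hJL, hLJ, main i j]
  have part1 : ∀ x : V, J (L x) = L (J x) := by
    intro x
    have hcomp : (J ∘ₗ L) = (L ∘ₗ J) := e.toBasis.ext fun i => by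
      simpa using comm_basis i
    simpa using LinearMap.congr_fun hcomp x
  refine ⟨part1, fun x y => ?_⟩
  calc ⟪J (L x), y⟫ = -⟪L x, J y⟫ := hJskew _ _
    _ = ⟪x, L (J y)⟫ := by rw [hLskew]; ring
    _ = ⟪x, J (L y)⟫ := by rw [part1 y]
end

section
/- Let V be an oriented 4-dimensional real inner product space, J a self-dual orthogonal complex structure on V with associated 2-form ω(x,y) = ⟨Jx, y⟩, and let (u,v) be an orthonormal pair in V. Set η = ω(u,v). Then there exists a positively oriented orthonormal basis (e₁,e₂,e₃,e₄) of V with e₁ = u and e₂ = v such that the matrix (ω(e_A,e_B))_{A,B=1,...,4} equals [[0, η, √(1−η²), 0], [−η, 0, 0, −√(1−η²)], [−√(1−η²), 0, 0, η], [0, √(1−η²), −η, 0]]. -/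
open scoped RealInnerProductSpace

/-!
In an orthonormal basis `e`, the matrix `ω A B = ⟪J (e A), e B⟫` of an orthogonal complex
structure is skew-symmetric and its rows are unit vectors (they are the coordinates of `J (e A)`),
so the squares of its six upper entries sum to `2`. Self-duality says that its Pfaffian
`ω 0 1 * ω 2 3 - ω 0 2 * ω 1 3 + ω 0 3 * ω 1 2` is `1`; hence
`(ω 2 3 - ω 0 1)² + (ω 1 3 + ω 0 2)² + (ω 1 2 - ω 0 3)² = 0` and the whole matrix is determined by
its first row. Taking `e 2` along the component of `J u` orthogonal to `v`, and flipping `e 3` if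
needed to fix the orientation, makes that row `(0, η, √(1 - η²), 0)`.
-/

section

variable {V : Type*} [NormedAddCommGroup V] [InnerProductSpace ℝ V]

theorem OrthonormalBasis.exists_orientation_eq_of_forall_ne_apply_eq {ι : Type*} [Fintype ι]
    [DecidableEq ι] (b : OrthonormalBasis ι ℝ V) (o : Orientation ℝ V ι) (i : ι) :
    ∃ b' : OrthonormalBasis ι ℝ V, b'.toBasis.orientation = o ∧ ∀ j ≠ i, b' j = b j := by
  by_cases hb : b.toBasis.orientation = o
  · exact ⟨b, hb, fun _ _ => rfl⟩
  set B := b.toBasis.unitsSMul (Function.update 1 i (-1))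
  have hB : ∀ j, B j = if j = i then -b j else b j := by
    intro j
    rw [Module.Basis.unitsSMul_apply]
    split_ifs with h <;> simp [h]
  have hBo : Orthonormal ℝ B :=
    b.orthonormal.orthonormal_of_forall_eq_or_eq_neg fun j => by rw [hB]; split_ifs <;> simp
  refine ⟨B.toOrthonormalBasis hBo, ?_, fun j hj => ?_⟩
  · rw [Module.Basis.toBasis_toOrthonormalBasis, Module.Basis.orientation_neg_single]
    exact ((b.toBasis.orientation_ne_iff_eq_neg o).1 (Ne.symm hb)).symm
  · simp [hB, hj]

theorem Orthonormal.exists_orthonormalBasis_orientation_eq_castLE {k n : ℕ} (hkn : k < n)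
    (hn : Module.finrank ℝ V = n) {f : Fin k → V} (hf : Orthonormal ℝ f)
    (o : Orientation ℝ V (Fin n)) :
    ∃ b : OrthonormalBasis (Fin n) ℝ V, b.toBasis.orientation = o ∧
      ∀ i, b (Fin.castLE hkn.le i) = f i := by
  set s : Set (Fin n) := {j | (j : ℕ) < k}
  set g : Fin n → V := fun j => if h : (j : ℕ) < k then f ⟨j, h⟩ else 0
  have hg : Orthonormal ℝ (s.domRestrict g) := by
    have hsg : s.domRestrict g = f ∘ fun j : s => (⟨j, j.2⟩ : Fin k) := funext fun j => dif_pos j.2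
    rw [hsg]
    exact hf.comp _ fun j j' h => Subtype.ext (Fin.ext (Fin.mk.inj h))
  have : FiniteDimensional ℝ V := .of_finrank_pos (by omega)
  obtain ⟨b, hb⟩ := hg.exists_orthonormalBasis_extension_of_card_eq (by simpa using hn)
  obtain ⟨b', hb'o, hb'⟩ := b.exists_orientation_eq_of_forall_ne_apply_eq o ⟨k, hkn⟩
  refine ⟨b', hb'o, fun i => ?_⟩
  have hi : Fin.castLE hkn.le i ≠ ⟨k, hkn⟩ := by simp [Fin.ext_iff, i.2.ne]
  rw [hb' _ hi, hb _ i.2]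
  exact dif_pos i.2

theorem exists_orthonormalBasis_orientation_eq_inner_decomposition
    (hdim : Module.finrank ℝ V = 4) (o : Orientation ℝ V (Fin 4)) {u v y : V}
    (hu : ‖u‖ = 1) (hv : ‖v‖ = 1) (huv : ⟪u, v⟫ = 0) (huy : ⟪u, y⟫ = 0) :
    ∃ E : OrthonormalBasis (Fin 4) ℝ V, E.toBasis.orientation = o ∧ E 0 = u ∧ E 1 = v ∧
      y = ⟪v, y⟫ • v + ‖y - ⟪v, y⟫ • v‖ • E 2 := by
  set p := y - ⟪v, y⟫ • v
  have huv' : Orthonormal ℝ ![u, v] := by simp [hu, hv, huv]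
  by_cases hp : p = 0
  · obtain ⟨E, hEo, hE⟩ :=
      huv'.exists_orthonormalBasis_orientation_eq_castLE (by norm_num) hdim o
    refine ⟨E, hEo, by simpa using hE 0, by simpa using hE 1, ?_⟩
    rw [hp, norm_zero, zero_smul, add_zero, ← sub_eq_zero]
    exact hp
  · have hpu : ⟪u, p⟫ = 0 := by
      simp [p, inner_sub_right, real_inner_smul_right, huy, huv]
    have hpv : ⟪v, p⟫ = 0 := by
      simp [p, inner_sub_right, real_inner_smul_right, hv]
    have hw : Orthonormal ℝ ![u, v, ‖p‖⁻¹ • p] := by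
      simp [hu, hv, huv, hpu, hpv, real_inner_smul_right, norm_smul, hp, Fin.forall_fin_two]
    obtain ⟨E, hEo, hE⟩ := hw.exists_orthonormalBasis_orientation_eq_castLE (by norm_num) hdim o
    refine ⟨E, hEo, by simpa using hE 0, by simpa using hE 1, ?_⟩
    rw [show E 2 = ‖p‖⁻¹ • p by simpa using hE 2, smul_smul,
      mul_inv_cancel₀ (norm_ne_zero_iff.2 hp), one_smul, add_sub_cancel]

section ComplexStructure

variable (J : V →ₗ[ℝ] V)

theorem inner_apply_eq_neg_inner_apply (hJ2 : ∀ x, J (J x) = -x)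
    (hJo : ∀ x y, ⟪J x, J y⟫ = ⟪x, y⟫) (x y : V) : ⟪J x, y⟫ = -⟪J y, x⟫ := by
  rw [← hJo, hJ2, inner_neg_left, real_inner_comm]

theorem inner_apply_self_eq_zero (hJ2 : ∀ x, J (J x) = -x)
    (hJo : ∀ x y, ⟪J x, J y⟫ = ⟪x, y⟫) (x : V) : ⟪J x, x⟫ = 0 := by
  linarith [inner_apply_eq_neg_inner_apply J hJ2 hJo x x]

theorem sum_sq_inner_apply_orthonormalBasis (hJo : ∀ x y, ⟪J x, J y⟫ = ⟪x, y⟫)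
    {ι : Type*} [Fintype ι] (e : OrthonormalBasis ι ℝ V) (i : ι) : ∑ j, ⟪J (e i), e j⟫ ^ 2 = 1 := by
  rw [e.sum_sq_inner_left, ← real_inner_self_eq_norm_sq, hJo, real_inner_self_eq_norm_sq,
    e.norm_eq_one, one_pow]

theorem inner_apply_orthonormalBasis_selfDual (hJ2 : ∀ x, J (J x) = -x)
    (hJo : ∀ x y, ⟪J x, J y⟫ = ⟪x, y⟫) (e : OrthonormalBasis (Fin 4) ℝ V)
    (hsd : ⟪J (e 0), e 1⟫ * ⟪J (e 2), e 3⟫ - ⟪J (e 0), e 2⟫ * ⟪J (e 1), e 3⟫ +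
      ⟪J (e 0), e 3⟫ * ⟪J (e 1), e 2⟫ = 1) :
    ⟪J (e 2), e 3⟫ = ⟪J (e 0), e 1⟫ ∧ ⟪J (e 1), e 3⟫ = -⟪J (e 0), e 2⟫ ∧
      ⟪J (e 1), e 2⟫ = ⟪J (e 0), e 3⟫ := by
  have hrow := sum_sq_inner_apply_orthonormalBasis J hJo e
  have h0 := hrow 0
  have h1 := hrow 1
  have h2 := hrow 2
  have h3 := hrow 3
  simp only [Fin.sum_univ_four, inner_apply_self_eq_zero J hJ2 hJo] at h0 h1 h2 h3
  have hskew := inner_apply_eq_neg_inner_apply J hJ2 hJo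
  rw [hskew (e 1) (e 0)] at h1
  rw [hskew (e 2) (e 0), hskew (e 2) (e 1)] at h2
  rw [hskew (e 3) (e 0), hskew (e 3) (e 1), hskew (e 3) (e 2)] at h3
  have hsum : (⟪J (e 2), e 3⟫ - ⟪J (e 0), e 1⟫) ^ 2 + (⟪J (e 1), e 3⟫ + ⟪J (e 0), e 2⟫) ^ 2 +
      (⟪J (e 1), e 2⟫ - ⟪J (e 0), e 3⟫) ^ 2 = 0 := by
    linear_combination (h0 + h1 + h2 + h3) / 2 - 2 * hsd
  refine ⟨?_, ?_, ?_⟩ <;> nlinarith [sq_nonneg (⟪J (e 2), e 3⟫ - ⟪J (e 0), e 1⟫),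
    sq_nonneg (⟪J (e 1), e 3⟫ + ⟪J (e 0), e 2⟫), sq_nonneg (⟪J (e 1), e 2⟫ - ⟪J (e 0), e 3⟫)]

theorem inner_apply_orthonormalBasis_eq_matrix (hJ2 : ∀ x, J (J x) = -x)
    (hJo : ∀ x y, ⟪J x, J y⟫ = ⟪x, y⟫) (e : OrthonormalBasis (Fin 4) ℝ V)
    (hsd : ⟪J (e 0), e 1⟫ * ⟪J (e 2), e 3⟫ - ⟪J (e 0), e 2⟫ * ⟪J (e 1), e 3⟫ +
      ⟪J (e 0), e 3⟫ * ⟪J (e 1), e 2⟫ = 1) {a b c : ℝ}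
    (ha : ⟪J (e 0), e 1⟫ = a) (hb : ⟪J (e 0), e 2⟫ = b) (hc : ⟪J (e 0), e 3⟫ = c) (A B : Fin 4) :
    ⟪J (e A), e B⟫ = !![0, a, b, c; -a, 0, c, -b; -b, -c, 0, a; -c, b, -a, 0] A B := by
  obtain ⟨h23, h13, h12⟩ := inner_apply_orthonormalBasis_selfDual J hJ2 hJo e hsd
  have hskew := inner_apply_eq_neg_inner_apply J hJ2 hJo
  fin_cases A <;> fin_cases B <;>
    simp [inner_apply_self_eq_zero J hJ2 hJo, hskew (e 1) (e 0), hskew (e 2) (e 0),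
      hskew (e 3) (e 0), hskew (e 2) (e 1), hskew (e 3) (e 1), hskew (e 3) (e 2),
      ha, hb, hc, h23, h13, h12]

end ComplexStructure

end

/-- Given a self-dual orthogonal complex structure `J` with Kähler form `ω(x,y) = ⟪Jx,y⟫`
on an oriented 4-dimensional real inner product space and an orthonormal pair `(u,v)`
with `η = ω(u,v)`, there is a positively oriented orthonormal basis `(e₁,e₂,e₃,e₄)` with
`e₁ = u`, `e₂ = v` in which `ω` takes the standard matrix form determined by `η`. -/
theorem selfdual_form_normal_matrix
    {V : Type*} [NormedAddCommGroup V] [InnerProductSpace ℝ V]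
    (hdim : Module.finrank ℝ V = 4)
    (o : Orientation ℝ V (Fin 4))
    (J : V →ₗ[ℝ] V)
    (hJ2 : ∀ x : V, J (J x) = -x) (hJo : ∀ x y : V, ⟪J x, J y⟫ = ⟪x, y⟫)
    (hJsd : ∀ e : OrthonormalBasis (Fin 4) ℝ V, e.toBasis.orientation = o →
      ⟪J (e 0), e 1⟫ * ⟪J (e 2), e 3⟫ - ⟪J (e 0), e 2⟫ * ⟪J (e 1), e 3⟫ +
        ⟪J (e 0), e 3⟫ * ⟪J (e 1), e 2⟫ = 1)
    (u v : V) (hu : ‖u‖ = 1) (hv : ‖v‖ = 1) (huv : ⟪u, v⟫ = 0)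
    (η : ℝ) (hη : η = ⟪J u, v⟫) :
    ∃ e : OrthonormalBasis (Fin 4) ℝ V, e.toBasis.orientation = o ∧
      e 0 = u ∧ e 1 = v ∧
      ∀ A B : Fin 4, ⟪J (e A), e B⟫ =
        !![0, η, Real.sqrt (1 - η ^ 2), 0;
           -η, 0, 0, -Real.sqrt (1 - η ^ 2);
           -Real.sqrt (1 - η ^ 2), 0, 0, η;
           0, Real.sqrt (1 - η ^ 2), -η, 0] A B := by
  have huJu : ⟪u, J u⟫ = 0 := by
    rw [real_inner_comm]; exact inner_apply_self_eq_zero J hJ2 hJo u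
  obtain ⟨E, hEo, hE0, hE1, hJu⟩ :=
    exists_orthonormalBasis_orientation_eq_inner_decomposition hdim o hu hv huv huJu
  set t := ‖J u - ⟪v, J u⟫ • v‖
  rw [real_inner_comm, ← hη] at hJu
  have hrow : ∀ B, ⟪J (E 0), E B⟫ = η * ⟪E 1, E B⟫ + t * ⟪E 2, E B⟫ := fun B => by
    rw [hE0, hJu, inner_add_left, real_inner_smul_left, real_inner_smul_left, hE1]
  have h01 : ⟪J (E 0), E 1⟫ = η := by rw [hE0, hE1, hη]
  have h02 : ⟪J (E 0), E 2⟫ = t := by simp [hrow, E.inner_eq_ite]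
  have h03 : ⟪J (E 0), E 3⟫ = 0 := by simp [hrow, E.inner_eq_ite]
  have ht : Real.sqrt (1 - η ^ 2) = t := by
    have h := sum_sq_inner_apply_orthonormalBasis J hJo E 0
    rw [Fin.sum_univ_four, inner_apply_self_eq_zero J hJ2 hJo, h01, h02, h03] at h
    rw [show 1 - η ^ 2 = t ^ 2 by linarith, Real.sqrt_sq (norm_nonneg _)]
  refine ⟨E, hEo, hE0, hE1, fun A B => ?_⟩
  rw [inner_apply_orthonormalBasis_eq_matrix J hJ2 hJo E (hJsd E hEo) h01 h02 h03, ht, neg_zero]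
end

section
/- Let V be an oriented 4-dimensional real inner product space, J a self-dual orthogonal complex structure with 2-form α(x,y) = ⟨Jx, y⟩, and L an anti-self-dual orthogonal complex structure with 2-form β(x,y) = ⟨Lx, y⟩. Then the form ½(α + β) is calibrating, i.e. sup{½(α(u,v) + β(u,v)) : u, v ∈ V orthonormal} = 1, and it calibrates a unique two-plane: there is exactly one 2-dimensional subspace P of V admitting an orthonormal basis (u,v) with ½(α(u,v) + β(u,v)) = 1. -/
/-!
Write `A` for the matrix of an orthogonal complex structure in a positively oriented orthonormal
basis: `A` is skew with `A * A = -1`, so its six upper entries have squares summing to `2`, and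
`(A₀₁ ∓ A₂₃)² + (A₀₂ ± A₁₃)² + (A₀₃ ∓ A₁₂)² = 2 ∓ 2 Pf(A)`. Hence `Pf = 1` forces `A` to be
self-dual and `Pf = -1` anti-self-dual, and self-dual matrices commute with anti-self-dual ones.
So `J L = L J`, i.e. `(J - L)(J + L) = 0`, and the subspace `E = {J = L}` is nonzero (as `L ≠ -J`)
and proper (as `L ≠ J`). Both `E` and `Eᗮ` are `J`-invariant, and a nonzero `J`-invariant
subspace contains some `x, J x` and so has dimension at least two: `E` is a plane.

Since `⟪J u, v⟫ ≤ 1` on orthonormal pairs with equality iff `J u = v`, and likewise for `L`, the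
form `½(α + β)` has comass one and attains it exactly at pairs `(u, J u)` with `u ∈ E`, so the
only calibrated plane is `span {u, J u} = E`.
-/

open scoped RealInnerProductSpace Matrix
open Module

def pfaffian (A : Matrix (Fin 4) (Fin 4) ℝ) : ℝ :=
  A 0 1 * A 2 3 - A 0 2 * A 1 3 + A 0 3 * A 1 2

theorem pfaffian_neg (A : Matrix (Fin 4) (Fin 4) ℝ) : pfaffian (-A) = pfaffian A := by
  simp only [pfaffian, Matrix.neg_apply]
  ring

def selfDualMatrix (a b c : ℝ) : Matrix (Fin 4) (Fin 4) ℝ :=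
  !![0, a, b, c; -a, 0, c, -b; -b, -c, 0, a; -c, b, -a, 0]

def antiSelfDualMatrix (a b c : ℝ) : Matrix (Fin 4) (Fin 4) ℝ :=
  !![0, a, b, c; -a, 0, -c, b; -b, c, 0, -a; -c, -b, a, 0]

theorem commute_selfDualMatrix_antiSelfDualMatrix (a b c x y z : ℝ) :
    Commute (selfDualMatrix a b c) (antiSelfDualMatrix x y z) := by
  ext i j
  fin_cases i <;> fin_cases j <;>
    simp [selfDualMatrix, antiSelfDualMatrix, Matrix.mul_apply, Fin.sum_univ_four] <;> ring

theorem eq_zero_of_sq_add_sq_add_sq_eq_zero {x y z : ℝ} (h : x ^ 2 + y ^ 2 + z ^ 2 = 0) :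
    x = 0 ∧ y = 0 ∧ z = 0 := by
  refine ⟨?_, ?_, ?_⟩ <;> nlinarith [sq_nonneg x, sq_nonneg y, sq_nonneg z]

section SkewMatrix

variable {A : Matrix (Fin 4) (Fin 4) ℝ}

theorem eq_of_transpose_eq_neg_fin_four (hA : Aᵀ = -A) :
    A = !![0, A 0 1, A 0 2, A 0 3; -A 0 1, 0, A 1 2, A 1 3;
      -A 0 2, -A 1 2, 0, A 2 3; -A 0 3, -A 1 3, -A 2 3, 0] := by
  have h i j : A j i = -A i j := by simpa using congrFun (congrFun hA i) j
  ext i j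
  fin_cases i <;> fin_cases j <;> simp <;>
    linarith [h 0 0, h 1 1, h 2 2, h 3 3, h 0 1, h 0 2, h 0 3, h 1 2, h 1 3, h 2 3]

theorem sum_sq_upper_entries_eq_two (hA : Aᵀ = -A) (hA2 : A * A = -1) :
    A 0 1 ^ 2 + A 0 2 ^ 2 + A 0 3 ^ 2 + A 1 2 ^ 2 + A 1 3 ^ 2 + A 2 3 ^ 2 = 2 := by
  rw [eq_of_transpose_eq_neg_fin_four hA] at hA2
  have h0 := congrFun (congrFun hA2 0) 0
  have h1 := congrFun (congrFun hA2 1) 1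
  have h2 := congrFun (congrFun hA2 2) 2
  have h3 := congrFun (congrFun hA2 3) 3
  simp [Matrix.mul_apply, Fin.sum_univ_four] at h0 h1 h2 h3
  linear_combination (-1 / 2 : ℝ) * (h0 + h1 + h2 + h3)

theorem eq_selfDualMatrix (hA : Aᵀ = -A) (hA2 : A * A = -1) (hpf : pfaffian A = 1) :
    A = selfDualMatrix (A 0 1) (A 0 2) (A 0 3) := by
  obtain ⟨h1, h2, h3⟩ := eq_zero_of_sq_add_sq_add_sq_eq_zero
    (x := A 0 1 - A 2 3) (y := A 0 2 + A 1 3) (z := A 0 3 - A 1 2) <| by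
      unfold pfaffian at hpf
      linear_combination sum_sq_upper_entries_eq_two hA hA2 - 2 * hpf
  rw [eq_of_transpose_eq_neg_fin_four hA, selfDualMatrix]
  ext i j
  fin_cases i <;> fin_cases j <;> simp <;> linarith

theorem eq_antiSelfDualMatrix (hA : Aᵀ = -A) (hA2 : A * A = -1) (hpf : pfaffian A = -1) :
    A = antiSelfDualMatrix (A 0 1) (A 0 2) (A 0 3) := by
  obtain ⟨h1, h2, h3⟩ := eq_zero_of_sq_add_sq_add_sq_eq_zero
    (x := A 0 1 + A 2 3) (y := A 0 2 - A 1 3) (z := A 0 3 + A 1 2) <| by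
      unfold pfaffian at hpf
      linear_combination sum_sq_upper_entries_eq_two hA hA2 + 2 * hpf
  rw [eq_of_transpose_eq_neg_fin_four hA, antiSelfDualMatrix]
  ext i j
  fin_cases i <;> fin_cases j <;> simp <;> linarith

end SkewMatrix

theorem Submodule.exists_mem_norm_eq_one {E : Type*} [NormedAddCommGroup E] [NormedSpace ℝ E]
    {K : Submodule ℝ E} (hK : K ≠ ⊥) : ∃ u ∈ K, ‖u‖ = 1 := by
  obtain ⟨x, hxK, hx⟩ := K.exists_mem_ne_zero_of_ne_bot hK
  exact ⟨‖x‖⁻¹ • x, K.smul_mem _ hxK, norm_smul_inv_norm hx⟩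

section InnerProductSpace

variable {V : Type*} [NormedAddCommGroup V] [InnerProductSpace ℝ V]

structure IsOrthogonalComplexStructure (J : V →ₗ[ℝ] V) : Prop where
  apply_apply : ∀ x, J (J x) = -x
  inner_map_map : ∀ x y, ⟪J x, J y⟫ = ⟪x, y⟫

namespace IsOrthogonalComplexStructure

variable {J : V →ₗ[ℝ] V}

theorem inner_apply_left (hJ : IsOrthogonalComplexStructure J) (x y : V) :
    ⟪J x, y⟫ = -⟪x, J y⟫ := by
  rw [← hJ.inner_map_map x (J y), hJ.apply_apply, inner_neg_right, neg_neg]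

theorem inner_apply_right (hJ : IsOrthogonalComplexStructure J) (x y : V) :
    ⟪x, J y⟫ = -⟪J x, y⟫ := by
  rw [hJ.inner_apply_left, neg_neg]

theorem inner_self_apply (hJ : IsOrthogonalComplexStructure J) (x : V) : ⟪x, J x⟫ = 0 := by
  have := hJ.inner_apply_left x x
  rw [real_inner_comm] at this
  linarith

theorem norm_apply (hJ : IsOrthogonalComplexStructure J) (x : V) : ‖J x‖ = ‖x‖ := by
  rw [norm_eq_sqrt_real_inner, hJ.inner_map_map, ← norm_eq_sqrt_real_inner]

theorem mul_self (hJ : IsOrthogonalComplexStructure J) : J * J = -1 :=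
  LinearMap.ext hJ.apply_apply

theorem inner_apply_le (hJ : IsOrthogonalComplexStructure J) (x y : V) :
    ⟪J x, y⟫ ≤ ‖x‖ * ‖y‖ :=
  hJ.norm_apply x ▸ real_inner_le_norm (J x) y

theorem inner_apply_eq_one_iff (hJ : IsOrthogonalComplexStructure J) {u v : V}
    (hu : ‖u‖ = 1) (hv : ‖v‖ = 1) : ⟪J u, v⟫ = 1 ↔ J u = v :=
  inner_eq_one_iff_of_norm_eq_one (hJ.norm_apply u ▸ hu) hv

theorem linearIndependent_pair (hJ : IsOrthogonalComplexStructure J) {x : V} (hx : x ≠ 0) :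
    LinearIndependent ℝ ![x, J x] := by
  refine (LinearIndependent.pair_iff' hx).mpr fun a hax => hx ?_
  have : a * ‖x‖ ^ 2 = 0 := by
    rw [← hJ.inner_self_apply x, ← hax, real_inner_smul_right, real_inner_self_eq_norm_sq]
  have ha : a = 0 := by simpa [norm_ne_zero_iff.mpr hx] using this
  rw [← norm_eq_zero, ← hJ.norm_apply, ← hax, ha, zero_smul, norm_zero]

theorem finrank_span_pair (hJ : IsOrthogonalComplexStructure J) {x : V} (hx : x ≠ 0) :
    finrank ℝ (Submodule.span ℝ {x, J x}) = 2 := by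
  have := finrank_span_eq_card (hJ.linearIndependent_pair hx)
  rwa [Matrix.range_cons_cons_empty, Fintype.card_fin] at this

theorem apply_mem_orthogonal (hJ : IsOrthogonalComplexStructure J) {K : Submodule ℝ V}
    (hK : ∀ x ∈ K, J x ∈ K) {x : V} (hx : x ∈ Kᗮ) : J x ∈ Kᗮ := by
  intro y hy
  rw [hJ.inner_apply_right, Submodule.inner_right_of_mem_orthogonal (hK y hy) hx, neg_zero]

section FiniteDimensional

variable [FiniteDimensional ℝ V]

theorem eq_span_pair (hJ : IsOrthogonalComplexStructure J) {P : Submodule ℝ V}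
    (hP : finrank ℝ P = 2) {x : V} (hx : x ≠ 0) (hxP : x ∈ P) (hJxP : J x ∈ P) :
    P = Submodule.span ℝ {x, J x} :=
  (Submodule.eq_of_le_of_finrank_eq (Submodule.span_le.mpr (Set.pair_subset hxP hJxP))
    (hJ.finrank_span_pair hx ▸ hP.symm)).symm

theorem two_le_finrank_of_invariant (hJ : IsOrthogonalComplexStructure J) {K : Submodule ℝ V}
    (hK : ∀ x ∈ K, J x ∈ K) (hK0 : K ≠ ⊥) : 2 ≤ finrank ℝ K := by
  obtain ⟨x, hxK, hx⟩ := K.exists_mem_ne_zero_of_ne_bot hK0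
  exact hJ.finrank_span_pair hx ▸
    Submodule.finrank_mono (Submodule.span_le.mpr (Set.pair_subset hxK (hK x hxK)))

theorem finrank_eq_two_of_invariant (hJ : IsOrthogonalComplexStructure J)
    (hdim : finrank ℝ V = 4) {K : Submodule ℝ V} (hK : ∀ x ∈ K, J x ∈ K)
    (hK0 : K ≠ ⊥) (hKtop : K ≠ ⊤) : finrank ℝ K = 2 := by
  have h1 := hJ.two_le_finrank_of_invariant hK hK0
  have h2 := hJ.two_le_finrank_of_invariant (fun _ => hJ.apply_mem_orthogonal hK)
    (Submodule.orthogonal_eq_bot_iff.not.mpr hKtop)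
  have := K.finrank_add_finrank_orthogonal
  omega

theorem transpose_toMatrixOrthonormal (hJ : IsOrthogonalComplexStructure J) {ι : Type*}
    [Fintype ι] [DecidableEq ι] (e : OrthonormalBasis ι ℝ V) :
    (LinearMap.toMatrixOrthonormal e J)ᵀ = -LinearMap.toMatrixOrthonormal e J := by
  ext i j
  simp only [Matrix.transpose_apply, Matrix.neg_apply, LinearMap.toMatrixOrthonormal_apply_apply]
  rw [real_inner_comm, hJ.inner_apply_left]

theorem toMatrixOrthonormal_mul_self (hJ : IsOrthogonalComplexStructure J) {ι : Type*}
    [Fintype ι] [DecidableEq ι] (e : OrthonormalBasis ι ℝ V) :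
    LinearMap.toMatrixOrthonormal e J * LinearMap.toMatrixOrthonormal e J = -1 := by
  rw [← map_mul, hJ.mul_self, map_neg, map_one]

theorem pfaffian_toMatrixOrthonormal (hJ : IsOrthogonalComplexStructure J)
    (e : OrthonormalBasis (Fin 4) ℝ V) :
    pfaffian (LinearMap.toMatrixOrthonormal e J) =
      ⟪J (e 0), e 1⟫ * ⟪J (e 2), e 3⟫ - ⟪J (e 0), e 2⟫ * ⟪J (e 1), e 3⟫ +
        ⟪J (e 0), e 3⟫ * ⟪J (e 1), e 2⟫ := by
  simp only [pfaffian, LinearMap.toMatrixOrthonormal_apply_apply, hJ.inner_apply_right]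
  ring

end FiniteDimensional

end IsOrthogonalComplexStructure

variable {J L : V →ₗ[ℝ] V}

theorem apply_mem_eqLocus (hJ : ∀ x, J (J x) = -x) (hL : ∀ x, L (L x) = -x) {x : V}
    (hx : x ∈ J.eqLocus L) : J x ∈ J.eqLocus L := by
  rw [LinearMap.mem_eqLocus] at hx ⊢
  rw [hJ, hx, hL]

theorem add_mem_eqLocus_of_commute (hJ : ∀ x, J (J x) = -x) (hL : ∀ x, L (L x) = -x)
    (hJL : Commute J L) (x : V) : J x + L x ∈ J.eqLocus L := by
  rw [LinearMap.mem_eqLocus, map_add, map_add, hJ, hL, add_comm]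
  congr 1
  exact LinearMap.congr_fun hJL.eq x

theorem commute_of_pfaffian_eq_one_of_pfaffian_eq_neg_one [FiniteDimensional ℝ V]
    (hJ : IsOrthogonalComplexStructure J) (hL : IsOrthogonalComplexStructure L)
    (e : OrthonormalBasis (Fin 4) ℝ V)
    (hJe : pfaffian (LinearMap.toMatrixOrthonormal e J) = 1)
    (hLe : pfaffian (LinearMap.toMatrixOrthonormal e L) = -1) : Commute J L := by
  have key : Commute (LinearMap.toMatrixOrthonormal e J) (LinearMap.toMatrixOrthonormal e L) := by
    rw [eq_selfDualMatrix (hJ.transpose_toMatrixOrthonormal e)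
        (hJ.toMatrixOrthonormal_mul_self e) hJe,
      eq_antiSelfDualMatrix (hL.transpose_toMatrixOrthonormal e)
        (hL.toMatrixOrthonormal_mul_self e) hLe]
    exact commute_selfDualMatrix_antiSelfDualMatrix _ _ _ _ _ _
  simpa using key.map (LinearMap.toMatrixOrthonormal e).symm

theorem finrank_eqLocus_eq_two [FiniteDimensional ℝ V] (hJ : IsOrthogonalComplexStructure J)
    (hL : IsOrthogonalComplexStructure L) (e : OrthonormalBasis (Fin 4) ℝ V)
    (hJe : pfaffian (LinearMap.toMatrixOrthonormal e J) = 1)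
    (hLe : pfaffian (LinearMap.toMatrixOrthonormal e L) = -1) :
    finrank ℝ (J.eqLocus L) = 2 := by
  have hdim : finrank ℝ V = 4 := by simpa using finrank_eq_card_basis e.toBasis
  have hJL := commute_of_pfaffian_eq_one_of_pfaffian_eq_neg_one hJ hL e hJe hLe
  refine hJ.finrank_eq_two_of_invariant hdim
    (fun _ => apply_mem_eqLocus hJ.apply_apply hL.apply_apply) ?_ ?_
  · intro hbot
    have hLJ : L = -J := by
      ext x
      have hx := add_mem_eqLocus_of_commute hJ.apply_apply hL.apply_apply hJL x
      rw [hbot, Submodule.mem_bot] at hx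
      simpa using eq_neg_of_add_eq_zero_right hx
    rw [hLJ, map_neg, pfaffian_neg, hJe] at hLe
    norm_num at hLe
  · intro htop
    rw [LinearMap.eqLocus_eq_top.mp htop, hLe] at hJe
    norm_num at hJe

theorem half_inner_add_inner_le_one (hJ : IsOrthogonalComplexStructure J)
    (hL : IsOrthogonalComplexStructure L) {u v : V} (hu : ‖u‖ = 1) (hv : ‖v‖ = 1) :
    (⟪J u, v⟫ + ⟪L u, v⟫) / 2 ≤ 1 := by
  have hJuv := hJ.inner_apply_le u v
  have hLuv := hL.inner_apply_le u v
  rw [hu, hv] at hJuv hLuv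
  linarith

theorem half_inner_add_inner_eq_one_iff (hJ : IsOrthogonalComplexStructure J)
    (hL : IsOrthogonalComplexStructure L) {u v : V} (hu : ‖u‖ = 1) (hv : ‖v‖ = 1) :
    (⟪J u, v⟫ + ⟪L u, v⟫) / 2 = 1 ↔ J u = v ∧ L u = v := by
  rw [← hJ.inner_apply_eq_one_iff hu hv, ← hL.inner_apply_eq_one_iff hu hv]
  have hJuv := hJ.inner_apply_le u v
  have hLuv := hL.inner_apply_le u v
  rw [hu, hv] at hJuv hLuv
  constructor
  · intro h
    constructor <;> linarith
  · rintro ⟨hJ1, hL1⟩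
    rw [hJ1, hL1]
    norm_num

theorem eq_eqLocus_of_half_inner_add_inner_eq_one [FiniteDimensional ℝ V]
    (hJ : IsOrthogonalComplexStructure J) (hL : IsOrthogonalComplexStructure L)
    (hE : finrank ℝ (J.eqLocus L) = 2) {P : Submodule ℝ V} (hP : finrank ℝ P = 2)
    {u v : V} (hu : ‖u‖ = 1) (hv : ‖v‖ = 1) (huP : u ∈ P) (hvP : v ∈ P)
    (huv : (⟪J u, v⟫ + ⟪L u, v⟫) / 2 = 1) : P = J.eqLocus L := by
  obtain ⟨rfl, hLu⟩ := (half_inner_add_inner_eq_one_iff hJ hL hu hv).mp huv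
  have hu0 : u ≠ 0 := norm_ne_zero_iff.mp (by rw [hu]; norm_num)
  have huE : u ∈ J.eqLocus L := hLu.symm
  rw [hJ.eq_span_pair hP hu0 huP hvP,
    hJ.eq_span_pair hE hu0 huE (apply_mem_eqLocus hJ.apply_apply hL.apply_apply huE)]

end InnerProductSpace

/-- If `J` is a self-dual and `L` an anti-self-dual orthogonal complex structure on an
oriented 4-dimensional real inner product space, with forms `α(x,y) = ⟪Jx,y⟫` and
`β(x,y) = ⟪Lx,y⟫`, then `½(α+β)` is a calibrating form (its comass is 1), and it
calibrates a unique two-plane. -/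
theorem half_sum_calibrates_unique_plane
    {V : Type*} [NormedAddCommGroup V] [InnerProductSpace ℝ V]
    (hdim : Module.finrank ℝ V = 4)
    (o : Orientation ℝ V (Fin 4))
    (J L : V →ₗ[ℝ] V)
    (hJ2 : ∀ x : V, J (J x) = -x) (hJo : ∀ x y : V, ⟪J x, J y⟫ = ⟪x, y⟫)
    (hL2 : ∀ x : V, L (L x) = -x) (hLo : ∀ x y : V, ⟪L x, L y⟫ = ⟪x, y⟫)
    (hJsd : ∀ e : OrthonormalBasis (Fin 4) ℝ V, e.toBasis.orientation = o →
      ⟪J (e 0), e 1⟫ * ⟪J (e 2), e 3⟫ - ⟪J (e 0), e 2⟫ * ⟪J (e 1), e 3⟫ +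
        ⟪J (e 0), e 3⟫ * ⟪J (e 1), e 2⟫ = 1)
    (hLasd : ∀ e : OrthonormalBasis (Fin 4) ℝ V, e.toBasis.orientation = o →
      ⟪L (e 0), e 1⟫ * ⟪L (e 2), e 3⟫ - ⟪L (e 0), e 2⟫ * ⟪L (e 1), e 3⟫ +
        ⟪L (e 0), e 3⟫ * ⟪L (e 1), e 2⟫ = -1) :
    IsLUB {r : ℝ | ∃ u v : V, ‖u‖ = 1 ∧ ‖v‖ = 1 ∧ ⟪u, v⟫ = 0 ∧
        r = (⟪J u, v⟫ + ⟪L u, v⟫) / 2} 1 ∧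
    ∃! P : Submodule ℝ V, Module.finrank ℝ P = 2 ∧
      ∃ u v : V, ‖u‖ = 1 ∧ ‖v‖ = 1 ∧ ⟪u, v⟫ = 0 ∧ u ∈ P ∧ v ∈ P ∧
        (⟪J u, v⟫ + ⟪L u, v⟫) / 2 = 1 := by
  have : FiniteDimensional ℝ V := .of_finrank_pos (by omega)
  have hJ : IsOrthogonalComplexStructure J := ⟨hJ2, hJo⟩
  have hL : IsOrthogonalComplexStructure L := ⟨hL2, hLo⟩
  set e := o.finOrthonormalBasis (by norm_num) hdim
  have he : e.toBasis.orientation = o := o.finOrthonormalBasis_orientation _ _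
  have hE : finrank ℝ (J.eqLocus L) = 2 := finrank_eqLocus_eq_two hJ hL e
    (hJ.pfaffian_toMatrixOrthonormal e ▸ hJsd e he) (hL.pfaffian_toMatrixOrthonormal e ▸ hLasd e he)
  obtain ⟨u, huE, hu⟩ := Submodule.exists_mem_norm_eq_one (K := J.eqLocus L)
    fun h => by rw [← Submodule.finrank_eq_zero] at h; omega
  have hJu : ‖J u‖ = 1 := hJ.norm_apply u ▸ hu
  have hcal : (⟪J u, J u⟫ + ⟪L u, J u⟫) / 2 = 1 :=
    (half_inner_add_inner_eq_one_iff hJ hL hu hJu).mpr ⟨rfl, huE.symm⟩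
  refine ⟨⟨?_, fun b hb => hb ⟨u, J u, hu, hJu, hJ.inner_self_apply u, hcal.symm⟩⟩,
    J.eqLocus L, ⟨hE, u, J u, hu, hJu, hJ.inner_self_apply u, huE,
      apply_mem_eqLocus hJ2 hL2 huE, hcal⟩, ?_⟩
  · rintro r ⟨u, v, hu, hv, -, rfl⟩
    exact half_inner_add_inner_le_one hJ hL hu hv
  · rintro P ⟨hP, u, v, hu, hv, -, huP, hvP, huv⟩
    exact eq_eqLocus_of_half_inner_add_inner_eq_one hJ hL hE hP hu hv huP hvP huv
end

section
/- Let V be a 4-dimensional real inner product space, (e₁,e₂,e₃,e₄) an orthonormal basis of V, and J an orthogonal complex structure whose 2-form ω(x,y) = ⟨Jx, y⟩ satisfies ω(e₁,e₂) = ω(e₃,e₄) = η, ω(e₁,e₃) = −ω(e₂,e₄) = √(1−η²), ω(e₁,e₄) = ω(e₂,e₃) = 0, with −1 < η < 1. Let K be a J-invariant algebraic curvature tensor on V. Then for all X, Y ∈ V: K(X, Y, e₁, e₃) − K(X, Y, e₂, e₄) = √(1−η²) · Ric(JX, Y), where Ric(U, W) = Σ_{A=1}^{4} K(U, e_A, W,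 e_A). -/
open scoped RealInnerProductSpace

/-- In the adapted basis where the Kähler form of `J` has entries
`ω(e₁,e₂) = ω(e₃,e₄) = η`, `ω(e₁,e₃) = -ω(e₂,e₄) = √(1-η²)`, `ω(e₁,e₄) = ω(e₂,e₃) = 0`
with `-1 < η < 1`, a `J`-invariant algebraic curvature tensor satisfies
`K(X,Y,e₁,e₃) − K(X,Y,e₂,e₄) = √(1−η²) · Ric(JX, Y)`. -/
theorem curvature_contraction_eq_sqrt_ricci
    {V : Type*} [NormedAddCommGroup V] [InnerProductSpace ℝ V]
    (hdim : Module.finrank ℝ V = 4)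
    (e : OrthonormalBasis (Fin 4) ℝ V)
    (J : V →ₗ[ℝ] V)
    (hJ2 : ∀ x : V, J (J x) = -x) (hJo : ∀ x y : V, ⟪J x, J y⟫ = ⟪x, y⟫)
    (η : ℝ) (hη1 : -1 < η) (hη2 : η < 1)
    (h12 : ⟪J (e 0), e 1⟫ = η) (h34 : ⟪J (e 2), e 3⟫ = η)
    (h13 : ⟪J (e 0), e 2⟫ = Real.sqrt (1 - η ^ 2))
    (h24 : ⟪J (e 1), e 3⟫ = -Real.sqrt (1 - η ^ 2))
    (h14 : ⟪J (e 0), e 3⟫ = 0) (h23 : ⟪J (e 1), e 2⟫ = 0)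
    (K : V →ₗ[ℝ] V →ₗ[ℝ] V →ₗ[ℝ] V →ₗ[ℝ] ℝ)
    (hK1 : ∀ X Y Z W : V, K X Y Z W = -K Y X Z W)
    (hK2 : ∀ X Y Z W : V, K X Y Z W = -K X Y W Z)
    (hK3 : ∀ X Y Z W : V, K X Y Z W = K Z W X Y)
    (hBianchi : ∀ X Y Z W : V, K X Y Z W + K Y Z X W + K Z X Y W = 0)
    (hJinv : ∀ X Y Z W : V, K X Y (J Z) (J W) = K X Y Z W) :
    ∀ X Y : V,
      K X Y (e 0) (e 2) - K X Y (e 1) (e 3) =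
        Real.sqrt (1 - η ^ 2) * ∑ A : Fin 4, K (J X) (e A) Y (e A) := by
  intro X Y
  set σ : ℝ := Real.sqrt (1 - η ^ 2) with hσdef
  have hσ2 : σ ^ 2 = 1 - η ^ 2 := Real.sq_sqrt (by nlinarith)
  have hσpos : 0 < σ := Real.sqrt_pos.mpr (by nlinarith)
  have hσne : σ ≠ 0 := ne_of_gt hσpos
  -- antisymmetry of ω
  have hanti : ∀ x y : V, ⟪J x, y⟫ = -⟪J y, x⟫ := by
    intro x y
    have h1 : ⟪J x, y⟫ = -⟪x, J y⟫ := by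
      have := hJo x (J y)
      rw [hJ2] at this
      simp only [inner_neg_right] at this
      linarith [real_inner_comm x (J y), this]
    rw [h1, real_inner_comm]
  have hdiag : ∀ i : Fin 4, ⟪J (e i), e i⟫ = 0 := by
    intro i
    have := hanti (e i) (e i)
    linarith
  -- expansion of J on the basis
  have hJe : ∀ x : V, J x = ⟪J x, e 0⟫ • e 0 + ⟪J x, e 1⟫ • e 1 + ⟪J x, e 2⟫ • e 2
      + ⟪J x, e 3⟫ • e 3 := by
    intro x
    have := e.sum_repr' (J x)
    rw [Fin.sum_univ_four, real_inner_comm (J x) (e 0), real_inner_comm (J x) (e 1),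
      real_inner_comm (J x) (e 2), real_inner_comm (J x) (e 3)] at this
    linear_combination (norm := module) -this
  have hJe0 : J (e 0) = η • e 1 + σ • e 2 := by
    rw [hJe (e 0), hdiag, h12, h13, h14]
    module
  have hJe1 : J (e 1) = (-η) • e 0 + (-σ) • e 3 := by
    rw [hJe (e 1), hdiag, h23, h24, hanti (e 1) (e 0), h12]
    module
  have hJe2 : J (e 2) = (-σ) • e 0 + η • e 3 := by
    rw [hJe (e 2), hdiag, h34, hanti (e 2) (e 0), h13, hanti (e 2) (e 1), h23]
    module
  have hJe3 : J (e 3) = σ • e 1 + (-η) • e 2 := by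
    rw [hJe (e 3), hdiag, hanti (e 3) (e 0), h14, hanti (e 3) (e 1), h24,
      hanti (e 3) (e 2), h34]
    module
  -- J-invariance in the first pair
  have hJinv1 : ∀ A B Z W : V, K (J A) (J B) Z W = K A B Z W := by
    intro A B Z W
    rw [hK3, hJinv, ← hK3]
  -- change of basis for the Ricci contraction
  have hbasis : ∀ U W : V,
      (∑ A : Fin 4, K U (J (e A)) W (J (e A))) = ∑ A : Fin 4, K U (e A) W (e A) := by
    intro U W
    rw [Fin.sum_univ_four, Fin.sum_univ_four, hJe0, hJe1, hJe2, hJe3]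
    simp only [map_add, map_smul, LinearMap.add_apply, LinearMap.smul_apply, smul_eq_mul]
    linear_combination (K U (e 0) W (e 0) + K U (e 1) W (e 1) + K U (e 2) W (e 2)
      + K U (e 3) W (e 3)) * hσ2
  -- pointwise consequence of Bianchi + Kähler symmetry
  have hC : ∀ A : Fin 4, K X Y (e A) (J (e A)) =
      K (J X) (e A) Y (e A) + K (J X) (J (e A)) Y (J (e A)) := by
    intro A
    have hb := hBianchi X Y (e A) (J (e A))
    have h1 : K Y (e A) X (J (e A)) = -K (J X) (e A) Y (e A) := by
      have h := hJinv Y (e A) (J X) (e A)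
      rw [hJ2] at h
      simp only [map_neg, LinearMap.neg_apply] at h
      have h3 := hK3 Y (e A) (J X) (e A)
      linarith
    have h2 : K (e A) X Y (J (e A)) = -K (J X) (J (e A)) Y (J (e A)) := by
      rw [← hJinv1 (e A) X Y (J (e A)), hK1]
    linarith
  have hsum : (∑ A : Fin 4, K X Y (e A) (J (e A))) =
      2 * ∑ A : Fin 4, K (J X) (e A) Y (e A) := by
    rw [Finset.sum_congr rfl fun A _ => hC A, Finset.sum_add_distrib, hbasis]
    ring
  -- expanded version of hsum
  have hS : η * K X Y (e 0) (e 1) + σ * K X Y (e 0) (e 2) - σ * K X Y (e 1) (e 3)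
      + η * K X Y (e 2) (e 3) = ∑ A : Fin 4, K (J X) (e A) Y (e A) := by
    rw [Fin.sum_univ_four, hJe0, hJe1, hJe2, hJe3] at hsum
    simp only [map_add, map_smul, LinearMap.add_apply, LinearMap.smul_apply,
      smul_eq_mul] at hsum
    linear_combination hsum / 2 + (η / 2) * hK2 X Y (e 0) (e 1) + (σ / 2) * hK2 X Y (e 0) (e 2)
      - (σ / 2) * hK2 X Y (e 1) (e 3) + (η / 2) * hK2 X Y (e 2) (e 3)
  -- Kähler relation in the last pair
  have h01 : σ * (K X Y (e 0) (e 1) + K X Y (e 2) (e 3)) =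
      η * (K X Y (e 0) (e 2) - K X Y (e 1) (e 3)) := by
    have h := hJinv X Y (e 0) (e 1)
    rw [hJe0, hJe1] at h
    simp only [map_add, map_smul, LinearMap.add_apply, LinearMap.smul_apply,
      smul_eq_mul] at h
    apply mul_left_cancel₀ hσne
    linear_combination -h + (K X Y (e 0) (e 1)) * hσ2 - η ^ 2 * hK2 X Y (e 0) (e 1)
      - η * σ * hK2 X Y (e 0) (e 2)
  -- conclude
  apply mul_left_cancel₀ hσne
  linear_combination σ ^ 2 * hS - η * σ * h01
    + σ * (K X Y (e 1) (e 3) - K X Y (e 0) (e 2)) * hσ2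
end
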